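/- arXiv:2405.09859 — 5 statements merged into one kernel-verified Lean document; each statement's English description precedes it below -/
import Mathlib

section
/- Let X be a random variable supported in [0,1] with CDF F_X and inverse CDF F_X^{-1}, fix δ ∈ [0,1) and an adversary decision s ∈ (0,1]. Then the CVaR at level δ of the ski-rental cost C(X,s) = s·1_{X>s} + (X+1)·1_{X≤s} equals (1−δ)⁻¹·[(1−δ−F_X(s))·s + ∫₀^{F_X(s)} (1 + F_X^{-1}(t)) dt] if F_X(s) ≤ 1−δ, and equals (1−δ)⁻¹·∫_{F_X(s)−(1−δ)}^{F_X(s)} (1 + F_X^{-1}(t)) dt otherwise. -/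
/-! With `Q = F⁻¹` and `U` uniform on `(0,1]`, `Q U` has law `μ`, and `Q p ≤ s ↔ p ≤ F s`;
so the cost `C(s, Q p)` equals `1 + Q p` for `p ≤ F s` and `s` afterwards. As `s ≤ 1 ≤ 1 + Q p`,
the `1 - δ` largest costs sit on `(0, 1 - δ]` if `F s ≤ 1 - δ` and on `(F s - (1 - δ), F s]`
otherwise. The Rockafellar–Uryasev infimum is attained at the cost level separating that event
from its complement, where it equals the average cost over the event. -/

open MeasureTheory Set

/-- Conditional value-at-risk (loss version) of `f` under measure `μ` at level `δ ∈ [0,1)`. -/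
noncomputable def cvar (δ : ℝ) (μ : Measure ℝ) (f : ℝ → ℝ) : ℝ :=
  if δ = 1 then essSup f μ
  else ⨅ t : ℝ, t + (1 - δ)⁻¹ * ∫ x, max (f x - t) 0 ∂μ

/-- Continuous-time ski rental cost with buying cost 1. -/
noncomputable def csrCost (s x : ℝ) : ℝ := if x ≤ s then x + 1 else s

/-- CDF of the law `μ`. -/
noncomputable def cdfR (μ : Measure ℝ) (x : ℝ) : ℝ := (μ (Iic x)).toReal

/-- Inverse CDF of a law `μ` supported in `[a,b]`: `F⁻¹(p) = inf {x ∈ [a,b] : F(x) ≥ p}`. -/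
noncomputable def invCdf (a b : ℝ) (μ : Measure ℝ) (p : ℝ) : ℝ :=
  sInf {x | x ∈ Icc a b ∧ p ≤ cdfR μ x}

open ProbabilityTheory Filter Topology

lemma cdfR_eq_cdf (μ : Measure ℝ) [IsProbabilityMeasure μ] : cdfR μ = cdf μ :=
  funext fun x => (cdf_eq_real μ x).symm

lemma cdfR_nonneg (μ : Measure ℝ) [IsProbabilityMeasure μ] (x : ℝ) : 0 ≤ cdfR μ x :=
  cdfR_eq_cdf μ ▸ cdf_nonneg μ x

lemma cdfR_le_one (μ : Measure ℝ) [IsProbabilityMeasure μ] (x : ℝ) : cdfR μ x ≤ 1 :=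
  cdfR_eq_cdf μ ▸ cdf_le_one μ x

section Quantile

variable {μ : Measure ℝ} {a b p x : ℝ}

lemma cdfR_eq_zero_of_lt (hsupp : μ (Icc a b)ᶜ = 0) (hx : x < a) : cdfR μ x = 0 := by
  have hnull : μ (Iic x) = 0 :=
    measure_mono_null (fun y (hy : y ≤ x) (hy' : y ∈ Icc a b) => (hy.trans_lt hx).not_ge hy'.1)
      hsupp
  rw [cdfR, hnull, ENNReal.toReal_zero]

variable [IsProbabilityMeasure μ]

lemma le_of_measure_compl_Icc_eq_zero (hsupp : μ (Icc a b)ᶜ = 0) : a ≤ b := by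
  by_contra h
  rw [Icc_eq_empty h, compl_empty, measure_univ] at hsupp
  exact one_ne_zero hsupp

lemma cdfR_eq_one_of_le (hsupp : μ (Icc a b)ᶜ = 0) (hx : b ≤ x) : cdfR μ x = 1 := by
  have hfull : μ (Iic x) = 1 := (prob_compl_eq_zero_iff measurableSet_Iic).1 <|
    measure_mono_null (fun y (hy : ¬y ≤ x) (hy' : y ∈ Icc a b) => hy (hy'.2.trans hx)) hsupp
  rw [cdfR, hfull, ENNReal.toReal_one]

lemma exists_gt_cdfR_lt (h : cdfR μ x < p) : ∃ y > x, cdfR μ y < p := by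
  rw [cdfR_eq_cdf] at h ⊢
  have hright : ∀ᶠ y in 𝓝[>] x, cdf μ y < p :=
    ((cdf μ).right_continuous x).eventually_lt_const h |>.filter_mono
      (nhdsWithin_mono x Ioi_subset_Ici_self)
  obtain ⟨y, hy, hxy⟩ := (hright.and self_mem_nhdsWithin).exists
  exact ⟨y, hxy, hy⟩

lemma right_mem_invCdf_set (hsupp : μ (Icc a b)ᶜ = 0) (hp : p ≤ 1) :
    b ∈ {y | y ∈ Icc a b ∧ p ≤ cdfR μ y} :=
  ⟨right_mem_Icc.2 (le_of_measure_compl_Icc_eq_zero hsupp),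
    (cdfR_eq_one_of_le hsupp le_rfl).symm ▸ hp⟩

lemma invCdf_mem_Icc (hsupp : μ (Icc a b)ᶜ = 0) (hp : p ≤ 1) : invCdf a b μ p ∈ Icc a b :=
  ⟨le_csInf ⟨b, right_mem_invCdf_set hsupp hp⟩ fun _ hy => hy.1.1,
    csInf_le ⟨a, fun _ hy => hy.1.1⟩ (right_mem_invCdf_set hsupp hp)⟩

lemma invCdf_le_iff (hsupp : μ (Icc a b)ᶜ = 0) (hp : p ∈ Ioc 0 1) :
    invCdf a b μ p ≤ x ↔ p ≤ cdfR μ x := by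
  constructor
  · intro hQx
    by_contra! hFx
    obtain ⟨y, hxy, hFy⟩ := exists_gt_cdfR_lt hFx
    have hyQ : y ≤ invCdf a b μ p := le_csInf ⟨b, right_mem_invCdf_set hsupp hp.2⟩ fun z hz =>
      le_of_not_gt fun hzy => (hz.2.trans ((cdfR_eq_cdf μ ▸ (cdf μ).mono) hzy.le)).not_gt hFy
    linarith
  · intro hpF
    have hax : a ≤ x := le_of_not_gt fun hxa => by
      rw [cdfR_eq_zero_of_lt hsupp hxa] at hpF
      linarith [hp.1]
    have hmin : min x b ∈ {y | y ∈ Icc a b ∧ p ≤ cdfR μ y} := by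
      refine ⟨⟨le_min hax (le_of_measure_compl_Icc_eq_zero hsupp), min_le_right x b⟩, ?_⟩
      rcases le_total x b with hxb | hbx
      · rwa [min_eq_left hxb]
      · rw [min_eq_right hbx, cdfR_eq_one_of_le hsupp le_rfl]
        exact hp.2
    exact (csInf_le ⟨a, fun _ hy => hy.1.1⟩ hmin).trans (min_le_left x b)

lemma monotoneOn_invCdf (hsupp : μ (Icc a b)ᶜ = 0) : MonotoneOn (invCdf a b μ) (Ioc 0 1) :=
  fun _ hp _ hq hpq => (invCdf_le_iff hsupp hp).2 (hpq.trans ((invCdf_le_iff hsupp hq).1 le_rfl))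

lemma aemeasurable_invCdf (hsupp : μ (Icc a b)ᶜ = 0) :
    AEMeasurable (invCdf a b μ) (volume.restrict (Ioc 0 1)) :=
  aemeasurable_restrict_of_monotoneOn measurableSet_Ioc (monotoneOn_invCdf hsupp)

theorem map_invCdf_volume (hsupp : μ (Icc a b)ᶜ = 0) :
    (volume.restrict (Ioc 0 1)).map (invCdf a b μ) = μ := by
  refine (Measure.ext_of_Iic μ _ fun x => ?_).symm
  have hpre : invCdf a b μ ⁻¹' Iic x ∩ Ioc 0 1 = Ioc 0 (cdfR μ x) := by
    ext p
    refine ⟨fun hp => ⟨hp.2.1, (invCdf_le_iff hsupp hp.2).1 hp.1⟩, fun hp => ?_⟩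
    have hp01 : p ∈ Ioc 0 1 := ⟨hp.1, hp.2.trans (cdfR_le_one μ x)⟩
    exact ⟨(invCdf_le_iff hsupp hp01).2 hp.2, hp01⟩
  rw [Measure.map_apply_of_aemeasurable (aemeasurable_invCdf hsupp) measurableSet_Iic,
    Measure.restrict_apply' measurableSet_Ioc, hpre, Real.volume_Ioc, sub_zero, cdfR,
    ENNReal.ofReal_toReal (measure_ne_top μ _)]

end Quantile

section CVaR

variable {δ : ℝ} {ν : Measure ℝ}

lemma cvar_map (hδ : δ ≠ 1) {φ f : ℝ → ℝ} (hφ : AEMeasurable φ ν)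
    (hf : AEMeasurable f (ν.map φ)) : cvar δ (ν.map φ) f = cvar δ ν (f ∘ φ) := by
  simp only [cvar, if_neg hδ]
  congr! 4 with t
  exact integral_map hφ ((hf.sub_const t).max aemeasurable_const).aestronglyMeasurable

/-- Rockafellar–Uryasev: `(h - t)⁺ ≥ (h - t) 𝟙_A` for every `t`, with equality at `t = t₀`. -/
theorem cvar_eq_setIntegral_of_separating [IsFiniteMeasure ν] (hδ : δ < 1) {h : ℝ → ℝ}
    (hh : Integrable h ν) {A : Set ℝ} (hA : MeasurableSet A) (hνA : ν.real A = 1 - δ) {t₀ : ℝ}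
    (hge : ∀ᵐ x ∂ν, x ∈ A → t₀ ≤ h x) (hle : ∀ᵐ x ∂ν, x ∉ A → h x ≤ t₀) :
    cvar δ ν h = (1 - δ)⁻¹ * ∫ x in A, h x ∂ν := by
  have hδ' : 1 - δ ≠ 0 := (sub_pos.2 hδ).ne'
  have hsub (t : ℝ) : ∫ x in A, (h x - t) ∂ν = ∫ x in A, h x ∂ν - (1 - δ) * t := by
    rw [integral_sub hh.integrableOn (integrable_const t), setIntegral_const, hνA, smul_eq_mul]
  have hlower (t : ℝ) : (1 - δ)⁻¹ * ∫ x in A, h x ∂ν ≤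
      t + (1 - δ)⁻¹ * ∫ x, max (h x - t) 0 ∂ν := by
    have hposInt : Integrable (fun x => max (h x - t) 0) ν :=
      (hh.sub (integrable_const t)).pos_part
    have hbound : ∫ x in A, h x ∂ν - (1 - δ) * t ≤ ∫ x, max (h x - t) 0 ∂ν :=
      calc ∫ x in A, h x ∂ν - (1 - δ) * t = ∫ x in A, (h x - t) ∂ν := (hsub t).symm
        _ ≤ ∫ x in A, max (h x - t) 0 ∂ν :=
          setIntegral_mono (hh.sub (integrable_const t)).integrableOn hposInt.integrableOn
            fun x => le_max_left _ _
        _ ≤ ∫ x, max (h x - t) 0 ∂ν :=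
          setIntegral_le_integral hposInt (ae_of_all _ fun x => le_max_right _ _)
    calc (1 - δ)⁻¹ * ∫ x in A, h x ∂ν = t + (1 - δ)⁻¹ * (∫ x in A, h x ∂ν - (1 - δ) * t) := by
          field_simp
          ring
      _ ≤ t + (1 - δ)⁻¹ * ∫ x, max (h x - t) 0 ∂ν := by gcongr
  have hattained : t₀ + (1 - δ)⁻¹ * ∫ x, max (h x - t₀) 0 ∂ν =
      (1 - δ)⁻¹ * ∫ x in A, h x ∂ν := by
    have hpos : (fun x => max (h x - t₀) 0) =ᵐ[ν] A.indicator (fun x => h x - t₀) := by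
      filter_upwards [hge, hle] with x hxge hxle
      by_cases hx : x ∈ A
      · rw [indicator_of_mem hx, max_eq_left (sub_nonneg.2 (hxge hx))]
      · rw [indicator_of_notMem hx, max_eq_right (sub_nonpos.2 (hxle hx))]
    rw [integral_congr_ae hpos, integral_indicator hA, hsub]
    field_simp
    ring
  rw [cvar, if_neg hδ.ne]
  exact le_antisymm (ciInf_le_of_le ⟨_, forall_mem_range.2 hlower⟩ t₀ hattained.le)
    (le_ciInf hlower)

end CVaR

lemma measureReal_restrict_Ioc_of_subset {S : Set ℝ} {u v : ℝ} (huv : u ≤ v) (h : Ioc u v ⊆ S) :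
    (volume.restrict S).real (Ioc u v) = v - u := by
  rw [measureReal_restrict_apply measurableSet_Ioc, inter_eq_left.2 h,
    Real.volume_real_Ioc_of_le huv]

lemma setIntegral_restrict_Ioc_of_subset {S : Set ℝ} {u v : ℝ} (f : ℝ → ℝ) (huv : u ≤ v)
    (h : Ioc u v ⊆ S) : ∫ x in Ioc u v, f x ∂(volume.restrict S) = ∫ x in u..v, f x := by
  rw [Measure.restrict_restrict_of_subset h, intervalIntegral.integral_of_le huv]

section SkiRental

variable {μ : Measure ℝ} [IsProbabilityMeasure μ] {a b s u v δ : ℝ}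

lemma measurable_csrCost (s : ℝ) : Measurable (csrCost s) :=
  Measurable.ite measurableSet_Iic (measurable_id.add_const 1) measurable_const

lemma csrCost_invCdf (hsupp : μ (Icc a b)ᶜ = 0) {p : ℝ} (hp : p ∈ Ioc 0 1) :
    csrCost s (invCdf a b μ p) = if p ≤ cdfR μ s then 1 + invCdf a b μ p else s := by
  simp only [csrCost, invCdf_le_iff hsupp hp, add_comm]

lemma integrableOn_csrCost_invCdf (hsupp : μ (Icc a b)ᶜ = 0) :
    IntegrableOn (fun p => csrCost s (invCdf a b μ p)) (Ioc 0 1) := by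
  refine Integrable.of_bound ((measurable_csrCost s).comp_aemeasurable
    (aemeasurable_invCdf hsupp)).aestronglyMeasurable (|s| + (|a| + |b|) + 1)
    ((ae_restrict_iff' measurableSet_Ioc).2 (ae_of_all _ fun p hp => ?_))
  have hQ := invCdf_mem_Icc hsupp hp.2
  have hQabs : |invCdf a b μ p| ≤ |a| + |b| :=
    (abs_le_max_abs_abs hQ.1 hQ.2).trans (max_le_add_of_nonneg (abs_nonneg a) (abs_nonneg b))
  rw [Real.norm_eq_abs, csrCost_invCdf hsupp hp]
  split_ifs
  · linarith [abs_add_le 1 (invCdf a b μ p), abs_nonneg s, abs_one (α := ℝ)]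
  · linarith [abs_nonneg a, abs_nonneg b]

lemma intervalIntegrable_csrCost_invCdf (hsupp : μ (Icc a b)ᶜ = 0) (hu : 0 ≤ u) (huv : u ≤ v)
    (hv : v ≤ 1) : IntervalIntegrable (fun p => csrCost s (invCdf a b μ p)) volume u v :=
  (intervalIntegrable_iff_integrableOn_Ioc_of_le huv).2 <|
    (integrableOn_csrCost_invCdf hsupp).mono_set (Ioc_subset_Ioc hu hv)

lemma intervalIntegral_csrCost_invCdf_of_le_cdfR (hsupp : μ (Icc a b)ᶜ = 0) (hu : 0 ≤ u)
    (huv : u ≤ v) (hv : v ≤ cdfR μ s) :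
    ∫ p in u..v, csrCost s (invCdf a b μ p) = ∫ p in u..v, (1 + invCdf a b μ p) := by
  rw [intervalIntegral.integral_of_le huv, intervalIntegral.integral_of_le huv]
  refine setIntegral_congr_fun measurableSet_Ioc fun p hp => ?_
  have hp01 : p ∈ Ioc 0 1 :=
    ⟨hu.trans_lt hp.1, hp.2.trans (hv.trans (cdfR_le_one μ s))⟩
  rw [csrCost_invCdf hsupp hp01, if_pos (hp.2.trans hv)]

lemma intervalIntegral_csrCost_invCdf_of_cdfR_le (hsupp : μ (Icc a b)ᶜ = 0)
    (hu : cdfR μ s ≤ u) (huv : u ≤ v) (hv : v ≤ 1) :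
    ∫ p in u..v, csrCost s (invCdf a b μ p) = (v - u) * s := by
  rw [intervalIntegral.integral_of_le huv, setIntegral_congr_fun (g := fun _ => s)
    measurableSet_Ioc fun p hp => ?_, setIntegral_const, Real.volume_real_Ioc_of_le huv,
    smul_eq_mul]
  have hp01 : p ∈ Ioc 0 1 :=
    ⟨((cdfR_nonneg μ s).trans hu).trans_lt hp.1, hp.2.trans hv⟩
  rw [csrCost_invCdf hsupp hp01, if_neg (hu.trans_lt hp.1).not_ge]


lemma cvar_csrCost_invCdf_of_cdfR_le (hsupp : μ (Icc a b)ᶜ = 0) (hs : s ≤ a + 1)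
    (hδ₀ : 0 ≤ δ) (hδ₁ : δ < 1) (hF : cdfR μ s ≤ 1 - δ) :
    cvar δ (volume.restrict (Ioc 0 1)) (fun p => csrCost s (invCdf a b μ p)) =
      (1 - δ)⁻¹ * ((1 - δ - cdfR μ s) * s + ∫ p in (0:ℝ)..(cdfR μ s), (1 + invCdf a b μ p)) := by
  have hF₀ : 0 ≤ cdfR μ s := cdfR_nonneg μ s
  have hA : Ioc 0 (1 - δ) ⊆ Ioc 0 1 := Ioc_subset_Ioc_right (by linarith)
  have hmass : (volume.restrict (Ioc 0 1)).real (Ioc 0 (1 - δ)) = 1 - δ := by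
    rw [measureReal_restrict_Ioc_of_subset (by linarith) hA, sub_zero]
  rw [cvar_eq_setIntegral_of_separating hδ₁ (integrableOn_csrCost_invCdf hsupp) measurableSet_Ioc
      hmass (t₀ := s),
    setIntegral_restrict_Ioc_of_subset _ (by linarith) hA,
    ← intervalIntegral.integral_add_adjacent_intervals (b := cdfR μ s)
      (intervalIntegrable_csrCost_invCdf hsupp le_rfl hF₀ (by linarith))
      (intervalIntegrable_csrCost_invCdf hsupp hF₀ hF (by linarith)),
    intervalIntegral_csrCost_invCdf_of_le_cdfR hsupp le_rfl hF₀ le_rfl,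
    intervalIntegral_csrCost_invCdf_of_cdfR_le hsupp le_rfl hF (by linarith)]
  · ring
  · refine ae_of_all _ fun p hp => ?_
    rw [csrCost_invCdf hsupp (hA hp)]
    split_ifs
    · linarith [(invCdf_mem_Icc hsupp (hA hp).2).1]
    · exact le_rfl
  · refine (ae_restrict_iff' measurableSet_Ioc).2 (ae_of_all _ fun p hp hpA => ?_)
    have hδp : 1 - δ < p := by
      by_contra! h
      exact hpA ⟨hp.1, h⟩
    rw [csrCost_invCdf hsupp hp, if_neg (by linarith)]

lemma cvar_csrCost_invCdf_of_lt_cdfR (hsupp : μ (Icc a b)ᶜ = 0) (hs : s ≤ a + 1)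
    (hδ₁ : δ < 1) (hF : 1 - δ < cdfR μ s) :
    cvar δ (volume.restrict (Ioc 0 1)) (fun p => csrCost s (invCdf a b μ p)) =
      (1 - δ)⁻¹ * ∫ p in (cdfR μ s - (1 - δ))..(cdfR μ s), (1 + invCdf a b μ p) := by
  set β := cdfR μ s - (1 - δ)
  have hβ : β ∈ Ioc 0 1 := ⟨by linarith, by linarith [cdfR_le_one μ s]⟩
  have hA : Ioc β (cdfR μ s) ⊆ Ioc 0 1 :=
    Ioc_subset_Ioc hβ.1.le (cdfR_le_one μ s)
  have hmass : (volume.restrict (Ioc 0 1)).real (Ioc β (cdfR μ s)) = 1 - δ := by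
    rw [measureReal_restrict_Ioc_of_subset (by linarith) hA]
    ring
  have hQβ : a ≤ invCdf a b μ β := (invCdf_mem_Icc hsupp hβ.2).1
  rw [cvar_eq_setIntegral_of_separating hδ₁ (integrableOn_csrCost_invCdf hsupp) measurableSet_Ioc
      hmass (t₀ := 1 + invCdf a b μ β),
    setIntegral_restrict_Ioc_of_subset _ (by linarith) hA,
    intervalIntegral_csrCost_invCdf_of_le_cdfR hsupp hβ.1.le (by linarith) le_rfl]
  · refine ae_of_all _ fun p hp => ?_
    rw [csrCost_invCdf hsupp (hA hp), if_pos hp.2]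
    linarith [monotoneOn_invCdf hsupp hβ (hA hp) hp.1.le]
  · refine (ae_restrict_iff' measurableSet_Ioc).2 (ae_of_all _ fun p hp hpA => ?_)
    rw [csrCost_invCdf hsupp hp]
    split_ifs with hpF
    · have hpβ : p ≤ β := by
        by_contra! h
        exact hpA ⟨h, hpF⟩
      linarith [monotoneOn_invCdf hsupp hp hβ hpβ]
    · linarith

end SkiRental

/-- Lemma 2: integral representation of the `δ`-CVaR of the ski-rental cost via the
inverse CDF of the purchase-time distribution. -/
theorem cvar_cost_integral (μ : Measure ℝ) (hp : IsProbabilityMeasure μ)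
    (hsupp : μ (Icc (0:ℝ) 1)ᶜ = 0) (δ : ℝ) (hδ : δ ∈ Ico (0:ℝ) 1)
    (s : ℝ) (hs : s ∈ Ioc (0:ℝ) 1) :
    cvar δ μ (fun x => csrCost s x) =
      if cdfR μ s ≤ 1 - δ then
        (1 - δ)⁻¹ * ((1 - δ - cdfR μ s) * s
          + ∫ t in (0:ℝ)..(cdfR μ s), (1 + invCdf 0 1 μ t))
      else
        (1 - δ)⁻¹ * ∫ t in (cdfR μ s - (1 - δ))..(cdfR μ s), (1 + invCdf 0 1 μ t) := by
  have hs₁ : s ≤ 0 + 1 := by linarith [hs.2]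
  have hquantile : cvar δ μ (fun x => csrCost s x) =
      cvar δ (volume.restrict (Ioc 0 1)) (fun p => csrCost s (invCdf 0 1 μ p)) := by
    conv_lhs => rw [← map_invCdf_volume hsupp]
    exact cvar_map hδ.2.ne (aemeasurable_invCdf hsupp) (measurable_csrCost s).aemeasurable
  rw [hquantile]
  split_ifs with hF
  · exact cvar_csrCost_invCdf_of_cdfR_le hsupp hs₁ hδ.1 hδ.2 hF
  · exact cvar_csrCost_invCdf_of_lt_cdfR hsupp hs₁ hδ.2 (not_le.1 hF)
end

section
/- Fix δ ∈ [0,1) and let c be the unique positive solution of e^c = 1 + 2c (c ≈ 1.25643). Define the probability density p_δ on [0,1] by p_δ(x) = (1−δ)·(1 − e^{c/(1−δ)}) / ( c·( e^{c/(1−δ)}·(x−1) − x ) ). Then the continuous-time ski rental strategy that buys at time X ∼ p_δ has δ-CVaR competitive ratio exactly α_δ^{p_δ} = 2 − 1/(e^{c/(1−δ)} − 1). In particular α_δ^{p_δ} < 2 for all δ ∈ [0,1), hence the optimal δ-CVaR competitive ratio satisfies α_δ^* < 2 for all δ ∈ [0,1). -/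
open MeasureTheory Set

/-- `δ`-CVaR competitive ratio of strategy `μ` at adversary decision `s`. -/
noncomputable def csrRatio (δ : ℝ) (μ : Measure ℝ) (s : ℝ) : ℝ :=
  cvar δ μ (fun x => csrCost s x) / min s 1

/-- `δ`-CVaR competitive ratio of strategy `μ` (supremum over adversary decisions `s > 0`). -/
noncomputable def csrCR (δ : ℝ) (μ : Measure ℝ) : ℝ :=
  ⨆ s : Ioi (0:ℝ), csrRatio δ μ (s : ℝ)

/-- Optimal `δ`-CVaR competitive ratio over all strategies (probability measures on `[0,∞)`). -/
noncomputable def csrOpt (δ : ℝ) : ℝ :=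
  ⨅ μ : {m : Measure ℝ // IsProbabilityMeasure m ∧ m (Iio 0) = 0}, csrCR δ (μ : Measure ℝ)

/-!
Write `E = exp (c / (1 - δ))`; the strategy `p_δ` is the density proportional to
`1 / (E - (E - 1) x)` on `[0, 1]`, so all its tail integrals are logarithms. When `min s 1` is
not too small, the interval `[q, min s 1]` of mass exactly `1 - δ` is the upper tail of the cost
`C(X, s)`, so the CVaR is the normalized integral of `x + 1` over it, namely
`2 min s 1 - 1 / (E - 1)`; the ratio is largest for `s ≥ 1`. For smaller `s`, evaluating the
Rockafellar–Uryasev objective at `t = s` bounds the ratio by the same constant: this reduces to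
an inequality for `(w + E - 1) log (E / w)`, proved by a concave–convex argument that uses
`e ^ c = 1 + 2 c` and `c > 5 / 4`.
-/

open Real
open scoped ENNReal

noncomputable def rockafellarUryasev (δ : ℝ) (μ : Measure ℝ) (f : ℝ → ℝ) (t : ℝ) : ℝ :=
  t + (1 - δ)⁻¹ * ∫ x, max (f x - t) 0 ∂μ

section CVaR

variable {δ : ℝ} {μ : Measure ℝ} {f : ℝ → ℝ}

lemma cvar_eq_iInf_rockafellarUryasev (hδ : δ ≠ 1) :
    cvar δ μ f = ⨅ t, rockafellarUryasev δ μ f t :=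
  if_neg hδ

lemma integral_le_rockafellarUryasev [IsProbabilityMeasure μ] (hδ : δ ∈ Ico 0 1)
    (hf : Integrable f μ) (t : ℝ) : ∫ x, f x ∂μ ≤ rockafellarUryasev δ μ f t := by
  have hmean : ∫ x, f x ∂μ - t ≤ ∫ x, max (f x - t) 0 ∂μ := by
    calc ∫ x, f x ∂μ - t = ∫ x, (f x - t) ∂μ := by
          rw [integral_sub hf (integrable_const t)]; simp
      _ ≤ _ := integral_mono (hf.sub (integrable_const t)) (hf.sub (integrable_const t)).pos_part
          fun _ => le_max_left _ _
  have hpos : 0 ≤ ∫ x, max (f x - t) 0 ∂μ := integral_nonneg fun _ => le_max_right _ _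
  have hinv : 1 ≤ (1 - δ)⁻¹ := (one_le_inv₀ (by linarith [hδ.2])).mpr (by linarith [hδ.1])
  have := le_mul_of_one_le_left hpos hinv
  unfold rockafellarUryasev
  linarith

lemma integral_le_cvar [IsProbabilityMeasure μ] (hδ : δ ∈ Ico 0 1) (hf : Integrable f μ) :
    ∫ x, f x ∂μ ≤ cvar δ μ f := by
  rw [cvar_eq_iInf_rockafellarUryasev hδ.2.ne]
  exact le_ciInf (integral_le_rockafellarUryasev hδ hf)

lemma cvar_le_rockafellarUryasev [IsProbabilityMeasure μ] (hδ : δ ∈ Ico 0 1)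
    (hf : Integrable f μ) (t : ℝ) : cvar δ μ f ≤ rockafellarUryasev δ μ f t := by
  rw [cvar_eq_iInf_rockafellarUryasev hδ.2.ne]
  exact ciInf_le ⟨_, Set.forall_mem_range.2 (integral_le_rockafellarUryasev hδ hf)⟩ t

lemma rockafellarUryasev_eq_of_tail [IsFiniteMeasure μ] (hf : Integrable f μ) {A : Set ℝ}
    (hA : MeasurableSet A) {t : ℝ} (hge : ∀ᵐ x ∂μ, x ∈ A → t ≤ f x)
    (hle : ∀ᵐ x ∂μ, x ∉ A → f x ≤ t) :
    rockafellarUryasev δ μ f t = t + (1 - δ)⁻¹ * (∫ x in A, f x ∂μ - t * μ.real A) := by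
  have hindicator : (fun x => max (f x - t) 0) =ᵐ[μ] A.indicator fun x => f x - t := by
    filter_upwards [hge, hle] with x hxge hxle
    by_cases hx : x ∈ A
    · simp [hx, hxge hx]
    · simp [hx, hxle hx]
  rw [rockafellarUryasev, integral_congr_ae hindicator, integral_indicator hA,
    integral_sub hf.integrableOn (integrable_const t), setIntegral_const, smul_eq_mul]
  ring

lemma setIntegral_div_le_rockafellarUryasev [IsFiniteMeasure μ] (hδ : δ < 1)
    (hf : Integrable f μ) {A : Set ℝ} (hA : MeasurableSet A) (hμA : μ.real A = 1 - δ) (t : ℝ) :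
    (∫ x in A, f x ∂μ) / (1 - δ) ≤ rockafellarUryasev δ μ f t := by
  have hβ : 0 < 1 - δ := by linarith
  have htail : ∫ x in A, f x ∂μ - t * (1 - δ) ≤ ∫ x, max (f x - t) 0 ∂μ :=
    calc ∫ x in A, f x ∂μ - t * (1 - δ) = ∫ x in A, (f x - t) ∂μ := by
          rw [integral_sub hf.integrableOn (integrable_const t), setIntegral_const, hμA,
            smul_eq_mul, mul_comm]
      _ ≤ ∫ x in A, max (f x - t) 0 ∂μ :=
          setIntegral_mono_on (hf.sub (integrable_const t)).integrableOn
            (hf.sub (integrable_const t)).pos_part.integrableOn hA fun _ _ => le_max_left _ _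
      _ ≤ ∫ x, max (f x - t) 0 ∂μ :=
          setIntegral_le_integral (hf.sub (integrable_const t)).pos_part
            (ae_of_all _ fun _ => le_max_right _ _)
  rw [rockafellarUryasev, div_le_iff₀ hβ, add_mul, mul_right_comm, inv_mul_cancel₀ hβ.ne',
    one_mul]
  linarith

lemma cvar_eq_setIntegral_div [IsProbabilityMeasure μ] (hδ : δ ∈ Ico 0 1)
    (hf : Integrable f μ) {A : Set ℝ} (hA : MeasurableSet A) (hμA : μ.real A = 1 - δ) {t : ℝ}
    (hge : ∀ᵐ x ∂μ, x ∈ A → t ≤ f x) (hle : ∀ᵐ x ∂μ, x ∉ A → f x ≤ t) :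
    cvar δ μ f = (∫ x in A, f x ∂μ) / (1 - δ) := by
  refine le_antisymm ?_ ?_
  · calc cvar δ μ f ≤ rockafellarUryasev δ μ f t := cvar_le_rockafellarUryasev hδ hf t
      _ = _ := by
        rw [rockafellarUryasev_eq_of_tail hf hA hge hle, hμA]
        field_simp [(by linarith [hδ.2] : (1 - δ) ≠ 0)]
        ring
  · rw [cvar_eq_iInf_rockafellarUryasev hδ.2.ne]
    exact le_ciInf (setIntegral_div_le_rockafellarUryasev hδ.2 hf hA hμA)

end CVaR

-- With `E = exp (c / (1 - δ))` this is the paper's density `p_δ`.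
noncomputable def recipDensity (E x : ℝ) : ℝ := (E - 1) / (log E * (E - (E - 1) * x))

noncomputable def recipMeasure (E : ℝ) : Measure ℝ :=
  (volume.restrict (Icc 0 1)).withDensity fun x => ENNReal.ofReal (recipDensity E x)

section RecipMeasure

variable {E : ℝ}

lemma one_le_sub_mul (hE : 1 < E) {x : ℝ} (hx : x ≤ 1) : 1 ≤ E - (E - 1) * x := by nlinarith

lemma recipDensity_nonneg (hE : 1 < E) {x : ℝ} (hx : x ≤ 1) : 0 ≤ recipDensity E x := by
  have := one_le_sub_mul hE hx
  have := log_pos hE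
  unfold recipDensity
  positivity

lemma ae_mem_Icc_recipMeasure : ∀ᵐ x ∂recipMeasure E, x ∈ Icc 0 1 :=
  withDensity_absolutelyContinuous _ _ (ae_restrict_mem measurableSet_Icc)

lemma recipMeasure_Iio_zero : recipMeasure E (Iio 0) = 0 :=
  measure_mono_null (fun _ hx h => (not_le.2 (mem_Iio.1 hx)) (mem_Icc.1 h).1)
    (ae_iff.1 ae_mem_Icc_recipMeasure)

lemma setIntegral_recipMeasure (hE : 1 < E) {A : Set ℝ} (hA : MeasurableSet A)
    (hA01 : A ⊆ Icc 0 1) (g : ℝ → ℝ) :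
    ∫ x in A, g x ∂recipMeasure E = ∫ x in A, g x * recipDensity E x := by
  have hmeas : Measurable fun x => (recipDensity E x).toNNReal := by
    unfold recipDensity; fun_prop
  change ∫ x in A, g x ∂(volume.restrict (Icc 0 1)).withDensity
    (fun x => ((recipDensity E x).toNNReal : ℝ≥0∞)) = _
  rw [setIntegral_withDensity_eq_setIntegral_smul hmeas g hA,
    Measure.restrict_restrict hA, inter_eq_left.2 hA01]
  refine setIntegral_congr_fun hA fun x hx => ?_
  rw [NNReal.smul_def, Real.coe_toNNReal _ (recipDensity_nonneg hE (hA01 hx).2), smul_eq_mul,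
    mul_comm]

lemma integral_affine_mul_recipDensity (hE : 1 < E) {u v : ℝ} (huv : u ≤ v) (hv : v ≤ 1)
    (a b : ℝ) :
    ∫ x in u..v, (a * x + b) * recipDensity E x =
      (a * (u - v) + (a * E + b * (E - 1)) / (E - 1) *
        (log (E - (E - 1) * u) - log (E - (E - 1) * v))) / log E := by
  have hE1 : E - 1 ≠ 0 := by linarith
  have hlogE : log E ≠ 0 := (log_pos hE).ne'
  have hw : ∀ x ∈ uIcc u v, E - (E - 1) * x ≠ 0 := fun x hx =>
    (zero_lt_one.trans_le (one_le_sub_mul hE (((uIcc_of_le huv) ▸ hx).2.trans hv))).ne'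
  have hderiv : ∀ x ∈ uIcc u v, HasDerivAt
      (fun y => (-(a * y) - (a * E + b * (E - 1)) / (E - 1) * log (E - (E - 1) * y)) / log E)
      ((a * x + b) * recipDensity E x) x := by
    intro x hx
    have hlin : HasDerivAt (fun y => E - (E - 1) * y) (-(E - 1)) x := by
      simpa using ((hasDerivAt_id x).const_mul (E - 1)).const_sub E
    have := ((((hasDerivAt_id x).const_mul a).neg).sub
      (((hlin.log (hw x hx))).const_mul ((a * E + b * (E - 1)) / (E - 1)))).div_const (log E)
    refine this.congr_deriv ?_
    have := hw x hx
    unfold recipDensity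
    field_simp
    ring
  have hcont : ContinuousOn (fun x => (a * x + b) * recipDensity E x) (uIcc u v) := by
    unfold recipDensity
    fun_prop (disch := exact fun x hx => mul_ne_zero hlogE (hw x hx))
  rw [intervalIntegral.integral_eq_sub_of_hasDerivAt hderiv hcont.intervalIntegrable]
  field_simp
  ring

lemma setIntegral_Icc_affine_recipMeasure (hE : 1 < E) {u v : ℝ} (hu : 0 ≤ u) (huv : u ≤ v)
    (hv : v ≤ 1) (a b : ℝ) :
    ∫ x in Icc u v, (a * x + b) ∂recipMeasure E =
      (a * (u - v) + (a * E + b * (E - 1)) / (E - 1) *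
        (log (E - (E - 1) * u) - log (E - (E - 1) * v))) / log E := by
  rw [setIntegral_recipMeasure hE measurableSet_Icc (Icc_subset_Icc hu hv),
    integral_Icc_eq_integral_Ioc, ← intervalIntegral.integral_of_le huv,
    integral_affine_mul_recipDensity hE huv hv]

lemma measureReal_Icc_recipMeasure (hE : 1 < E) {u v : ℝ} (hu : 0 ≤ u) (huv : u ≤ v)
    (hv : v ≤ 1) :
    (recipMeasure E).real (Icc u v) =
      (log (E - (E - 1) * u) - log (E - (E - 1) * v)) / log E := by
  have h := setIntegral_Icc_affine_recipMeasure hE hu huv hv 0 1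
  simp only [zero_mul, zero_add, setIntegral_const, smul_eq_mul, mul_one] at h
  rw [h]
  field_simp [(by linarith : E - 1 ≠ 0)]

lemma isProbabilityMeasure_recipMeasure (hE : 1 < E) :
    IsProbabilityMeasure (recipMeasure E) := by
  have hmass := measureReal_Icc_recipMeasure hE le_rfl zero_le_one le_rfl
  rw [mul_zero, sub_zero, mul_one, sub_sub_cancel, log_one, sub_zero,
    div_self (log_pos hE).ne', measureReal_def, ENNReal.toReal_eq_one_iff] at hmass
  constructor
  rw [← Measure.restrict_eq_self_of_ae_mem ae_mem_Icc_recipMeasure, Measure.restrict_apply_univ,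
    hmass]

end RecipMeasure

lemma five_quarters_lt_of_exp_eq {c : ℝ} (hc : 0 < c) (hce : exp c = 1 + 2 * c) : 5 / 4 < c := by
  have hexp : exp (5 / 4) < 7 / 2 := by
    have h5 : exp (5 / 4) ^ 4 < (7 / 2) ^ 4 :=
      calc exp (5 / 4) ^ 4 = exp 1 ^ 5 := by rw [← exp_nat_mul, ← exp_nat_mul]; norm_num
        _ < 2.7182818286 ^ 5 := pow_lt_pow_left₀ exp_one_lt_d9 (exp_pos 1).le (by norm_num)
        _ < (7 / 2) ^ 4 := by norm_num
    exact lt_of_pow_lt_pow_left₀ 4 (by norm_num) h5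
  by_contra! h
  -- for `c ≤ 5/4`, convexity of `exp` on `[0, 5/4]` and `exp (5/4) < 7/2` give `exp c < 1 + 2c`
  have hchord := convexOn_exp.2 (mem_univ 0) (mem_univ (5 / 4))
    (by linarith : 0 ≤ 1 - 4 * c / 5) (by positivity : 0 ≤ 4 * c / 5) (by ring)
  simp only [smul_eq_mul, mul_zero, zero_add, exp_zero, mul_one] at hchord
  rw [show 4 * c / 5 * (5 / 4) = c by ring] at hchord
  nlinarith

lemma nonneg_of_concave_convex {f f' f'' : ℝ → ℝ} {a m b : ℝ} (ham : a ≤ m) (hmb : m ≤ b)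
    (hf : ∀ x ∈ Icc a b, HasDerivAt f (f' x) x) (hf' : ∀ x ∈ Icc a b, HasDerivAt f' (f'' x) x)
    (hconc : ∀ x ∈ Ioo a m, f'' x ≤ 0) (hconv : ∀ x ∈ Ioo m b, 0 ≤ f'' x)
    (ha : 0 ≤ f a) (hb : 0 ≤ f b) (hb' : f' b ≤ 0) {x : ℝ} (hx : x ∈ Icc a b) : 0 ≤ f x := by
  have hleft : Icc a m ⊆ Icc a b := Icc_subset_Icc le_rfl hmb
  have hright : Icc m b ⊆ Icc a b := Icc_subset_Icc ham le_rfl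
  have hcont : ContinuousOn f (Icc a b) := fun x hx => (hf x hx).continuousAt.continuousWithinAt
  have hcont' : ContinuousOn f' (Icc a b) := fun x hx =>
    (hf' x hx).continuousAt.continuousWithinAt
  have hmono' : MonotoneOn f' (Icc m b) :=
    monotoneOn_of_hasDerivWithinAt_nonneg (convex_Icc m b) (hcont'.mono hright)
      (fun x hx => (hf' x (hright (interior_subset hx))).hasDerivWithinAt)
      (by rw [interior_Icc]; exact hconv)
  have hanti : AntitoneOn f (Icc m b) :=
    antitoneOn_of_hasDerivWithinAt_nonpos (convex_Icc m b) (hcont.mono hright)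
      (fun x hx => (hf x (hright (interior_subset hx))).hasDerivWithinAt)
      (by
        rw [interior_Icc]
        exact fun x hx => (hmono' (Ioo_subset_Icc_self hx) (right_mem_Icc.2 hmb) hx.2.le).trans hb')
  have hnonneg_right : ∀ x ∈ Icc m b, 0 ≤ f x := fun x hx =>
    hb.trans (hanti hx (right_mem_Icc.2 hmb) hx.2)
  have hconcave : ConcaveOn ℝ (Icc a m) f :=
    concaveOn_of_hasDerivWithinAt2_nonpos (convex_Icc a m) (hcont.mono hleft)
      (fun x hx => (hf x (hleft (interior_subset hx))).hasDerivWithinAt)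
      (fun x hx => (hf' x (hleft (interior_subset hx))).hasDerivWithinAt)
      (by rw [interior_Icc]; exact hconc)
  rcases le_total x m with hxm | hmx
  · have hseg : x ∈ segment ℝ a m := by rw [segment_eq_Icc ham]; exact ⟨hx.1, hxm⟩
    exact (le_min ha (hnonneg_right m ⟨le_rfl, hmb⟩)).trans
      (hconcave.ge_on_segment (left_mem_Icc.2 ham) (right_mem_Icc.2 ham) hseg)
  · exact hnonneg_right x ⟨hmx, hx.2⟩

lemma mul_log_sub_log_le {c E w : ℝ} (hc : 5 / 4 < c) (hce : exp c = 1 + 2 * c)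
    (hE : 1 + 2 * c ≤ E) (hw : E / (1 + 2 * c) ≤ w) (hwE : w ≤ E) :
    (E - 1) * (w + E - 1) * (log E - log w) ≤ (E - w) * (c * (E - 2) + E - 1) := by
  set K := c * (E - 2) + E - 1
  have h2c : 0 < 1 + 2 * c := by linarith
  have hpos : ∀ y ∈ Icc (E / (1 + 2 * c)) E, 0 < y := fun y hy =>
    (div_pos (by linarith) h2c).trans_le hy.1
  -- `φ` is concave left of its inflection point `E - 1` and convex right of it
  let φ : ℝ → ℝ := fun y => (E - y) * K - (E - 1) * (y + E - 1) * (log E - log y)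
  let φ' : ℝ → ℝ := fun y => -K - (E - 1) * (log E - log y) + (E - 1) + (E - 1) ^ 2 * y⁻¹
  let φ'' : ℝ → ℝ := fun y => (E - 1) * (y - (E - 1)) / y ^ 2
  have hφ : ∀ y ∈ Icc (E / (1 + 2 * c)) E, HasDerivAt φ (φ' y) y := by
    intro y hy
    have hy0 := (hpos y hy).ne'
    have := (((hasDerivAt_id y).const_sub E).mul_const K).sub
      (((((hasDerivAt_id y).add_const E).sub_const 1).const_mul (E - 1)).mul
        ((hasDerivAt_log hy0).const_sub (log E)))
    refine this.congr_deriv ?_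
    simp only [φ', id]
    field_simp
    ring
  have hφ' : ∀ y ∈ Icc (E / (1 + 2 * c)) E, HasDerivAt φ' (φ'' y) y := by
    intro y hy
    have hy0 := (hpos y hy).ne'
    have := ((((hasDerivAt_log hy0).const_sub (log E)).const_mul (E - 1)).const_sub (-K)
      |>.add_const (E - 1)).add ((hasDerivAt_inv hy0).const_mul ((E - 1) ^ 2))
    refine this.congr_deriv ?_
    simp only [φ'']
    field_simp
    ring
  have hlog : log E - log (E / (1 + 2 * c)) = c := by
    rw [log_div (by linarith) h2c.ne', ← hce, log_exp]; ring
  have hmid : E / (1 + 2 * c) ≤ E - 1 := by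
    rw [div_le_iff₀ h2c]; nlinarith
  refine nonneg_of_concave_convex (f := φ) hmid (by linarith) hφ hφ' ?_ ?_ ?_ ?_ ?_
    ⟨hw, hwE⟩ |> sub_nonneg.1
  · intro y hy
    exact div_nonpos_of_nonpos_of_nonneg
      (mul_nonpos_of_nonneg_of_nonpos (by linarith) (by linarith [hy.2])) (sq_nonneg y)
  · intro y hy
    exact div_nonneg (mul_nonneg (by linarith) (by linarith [hy.1])) (sq_nonneg y)
  · simp only [φ]
    rw [hlog]
    have : (E - E / (1 + 2 * c)) * K - (E - 1) * (E / (1 + 2 * c) + E - 1) * c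
        = c * (E - 1 - 2 * c) / (1 + 2 * c) := by
      field_simp
      ring
    rw [this]
    exact div_nonneg (mul_nonneg (by linarith) (by linarith)) h2c.le
  · simp [φ]
  · simp only [φ', sub_self, mul_zero, sub_zero]
    rw [← sub_nonneg]
    have hE0 : 0 < E := by linarith
    have : -(-K + (E - 1) + (E - 1) ^ 2 * E⁻¹) = ((c - 1) * E * (E - 2) - 1) / E := by
      field_simp
      ring
    rw [zero_sub, this]
    exact div_nonneg (by nlinarith) hE0.le

lemma csrCost_nonneg {s x : ℝ} (hs : 0 ≤ s) (hx : 0 ≤ x) : 0 ≤ csrCost s x := by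
  unfold csrCost; split_ifs <;> linarith

lemma csrCost_of_le {s x : ℝ} (hx : x ≤ s) : csrCost s x = x + 1 := if_pos hx

lemma integrable_csrCost {ν : Measure ℝ} [IsFiniteMeasure ν] (hν : ν (Iio 0) = 0) {s : ℝ}
    (hs : 0 ≤ s) : Integrable (csrCost s) ν := by
  have hmeas : Measurable (csrCost s) :=
    Measurable.ite measurableSet_Iic (measurable_id.add_const 1) measurable_const
  refine Integrable.of_bound hmeas.aestronglyMeasurable (s + 1) ?_
  filter_upwards [measure_eq_zero_iff_ae_notMem.1 hν] with x hx
  rw [mem_Iio, not_lt] at hx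
  rw [norm_of_nonneg (csrCost_nonneg hs hx)]
  unfold csrCost; split_ifs <;> linarith

lemma csrCR_nonneg {δ : ℝ} (hδ : δ ∈ Ico 0 1) (ν : Measure ℝ) [IsProbabilityMeasure ν]
    (hν : ν (Iio 0) = 0) : 0 ≤ csrCR δ ν := by
  refine Real.iSup_nonneg fun s => div_nonneg ?_ (le_min s.2.le zero_le_one)
  have hint := integrable_csrCost hν s.2.le
  refine (integral_nonneg_of_ae ?_).trans (integral_le_cvar hδ hint)
  filter_upwards [measure_eq_zero_iff_ae_notMem.1 hν] with x hx
  exact csrCost_nonneg s.2.le (not_lt.1 hx)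

lemma csrOpt_le_csrCR {δ : ℝ} (hδ : δ ∈ Ico 0 1) (ν : Measure ℝ) [IsProbabilityMeasure ν]
    (hν : ν (Iio 0) = 0) : csrOpt δ ≤ csrCR δ ν := by
  refine ciInf_le ⟨0, Set.forall_mem_range.2 fun m => ?_⟩ (⟨ν, inferInstance, hν⟩ :
    {m : Measure ℝ // IsProbabilityMeasure m ∧ m (Iio 0) = 0})
  have := m.2.1
  exact csrCR_nonneg hδ m.1 m.2.2

section RecipStrategy

variable {δ c E : ℝ}

lemma cvar_csrCost_recipMeasure_of_le (hδ : δ ∈ Ico 0 1) (hc : 0 < c)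
    (hce : exp c = 1 + 2 * c) (hlogE : log E = c / (1 - δ)) (hE : 1 < E) {s : ℝ} (hs : 0 < s)
    (hreg : (1 + 2 * c) * (E - (E - 1) * min s 1) ≤ E) :
    cvar δ (recipMeasure E) (csrCost s) = 2 * min s 1 - 1 / (E - 1) := by
  have := isProbabilityMeasure_recipMeasure hE
  set m := min s 1
  have hm0 : 0 < m := lt_min hs one_pos
  have hm1 : m ≤ 1 := min_le_right s 1
  have hms : m ≤ s := min_le_left s 1
  have hw := one_le_sub_mul hE hm1
  -- the upper tail `[q, m]` of the purchase time has probability exactly `1 - δ`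
  set q := (E - (1 + 2 * c) * (E - (E - 1) * m)) / (E - 1)
  have hwq : E - (E - 1) * q = (1 + 2 * c) * (E - (E - 1) * m) := by
    simp only [q]; field_simp [(by linarith : E - 1 ≠ 0)]; ring
  have hq0 : 0 ≤ q := div_nonneg (by linarith) (by linarith)
  have hqm : q ≤ m := by
    have : (E - 1) * q ≤ (E - 1) * m := by nlinarith
    exact le_of_mul_le_mul_left this (by linarith)
  have hlog : log (E - (E - 1) * q) - log (E - (E - 1) * m) = c := by
    rw [hwq, log_mul (by linarith) (by linarith), ← hce, log_exp]; ring
  have hmass : (recipMeasure E).real (Icc q m) = 1 - δ := by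
    rw [measureReal_Icc_recipMeasure hE hq0 hqm hm1, hlog, hlogE]
    field_simp [hc.ne', (by linarith [hδ.2] : 1 - δ ≠ 0)]
  have hge : ∀ᵐ x ∂recipMeasure E, x ∈ Icc q m → 1 + q ≤ csrCost s x :=
    ae_of_all _ fun x hx => by rw [csrCost_of_le (hx.2.trans hms)]; linarith [hx.1]
  have hle : ∀ᵐ x ∂recipMeasure E, x ∉ Icc q m → csrCost s x ≤ 1 + q := by
    filter_upwards [ae_mem_Icc_recipMeasure] with x hx01 hx
    unfold csrCost
    split_ifs with hxs
    · have : x < q := lt_of_not_ge fun h => hx ⟨h, le_min hxs hx01.2⟩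
      linarith
    · linarith [hx01.2]
  rw [cvar_eq_setIntegral_div hδ (integrable_csrCost recipMeasure_Iio_zero hs.le)
    measurableSet_Icc hmass hge hle]
  have hcongr : ∫ x in Icc q m, csrCost s x ∂recipMeasure E =
      ∫ x in Icc q m, (1 * x + 1) ∂recipMeasure E :=
    setIntegral_congr_fun measurableSet_Icc fun x hx => by
      rw [csrCost_of_le (hx.2.trans hms), one_mul]
  rw [hcongr, setIntegral_Icc_affine_recipMeasure hE hq0 hqm hm1, hlog, hlogE]
  simp only [q]
  field_simp [hc.ne', (by linarith [hδ.2] : 1 - δ ≠ 0), (by linarith : E - 1 ≠ 0)]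
  ring

lemma cvar_csrCost_recipMeasure_le (hδ : δ ∈ Ico 0 1) (hc : 0 < c) (hce : exp c = 1 + 2 * c)
    (hlogE : log E = c / (1 - δ)) (hE : 1 + 2 * c ≤ E) {s : ℝ} (hs : 0 < s) (hs1 : s ≤ 1)
    (hreg : E ≤ (1 + 2 * c) * (E - (E - 1) * s)) :
    cvar δ (recipMeasure E) (csrCost s) ≤ (2 - 1 / (E - 1)) * s := by
  have hE1 : 1 < E := by linarith
  have := isProbabilityMeasure_recipMeasure hE1
  have hint := integrable_csrCost recipMeasure_Iio_zero (ν := recipMeasure E) hs.le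
  have hge : ∀ᵐ x ∂recipMeasure E, x ∈ Icc 0 s → s ≤ csrCost s x :=
    ae_of_all _ fun x hx => by rw [csrCost_of_le hx.2]; linarith [hx.1]
  have hle : ∀ᵐ x ∂recipMeasure E, x ∉ Icc 0 s → csrCost s x ≤ s := by
    filter_upwards [ae_mem_Icc_recipMeasure] with x hx01 hx
    rw [csrCost, if_neg fun hxs => hx ⟨hx01.1, hxs⟩]
  have hcongr : ∫ x in Icc 0 s, csrCost s x ∂recipMeasure E =
      ∫ x in Icc 0 s, (1 * x + 1) ∂recipMeasure E :=
    setIntegral_congr_fun measurableSet_Icc fun x hx => by rw [csrCost_of_le hx.2, one_mul]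
  have hkey := mul_log_sub_log_le (w := E - (E - 1) * s) (five_quarters_lt_of_exp_eq hc hce) hce
    hE ((div_le_iff₀ (by linarith)).2 (by linarith)) (by nlinarith)
  have hE0 : 0 < E - 1 := by linarith
  -- the Rockafellar–Uryasev objective at `t = s` already gives the bound
  calc cvar δ (recipMeasure E) (csrCost s)
      ≤ rockafellarUryasev δ (recipMeasure E) (csrCost s) s :=
        cvar_le_rockafellarUryasev hδ hint s
    _ = s + (-s + (2 * E - 1 - (E - 1) * s) / (E - 1) * (log E - log (E - (E - 1) * s))) / c := by
        rw [rockafellarUryasev_eq_of_tail hint measurableSet_Icc hge hle, hcongr,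
          setIntegral_Icc_affine_recipMeasure hE1 le_rfl hs.le hs1,
          measureReal_Icc_recipMeasure hE1 le_rfl hs.le hs1, mul_zero, sub_zero]
        generalize log E - log (E - (E - 1) * s) = L
        rw [hlogE]
        field_simp [hc.ne', (by linarith [hδ.2] : 1 - δ ≠ 0)]
        ring
    _ ≤ (2 - 1 / (E - 1)) * s := by
        have hkey' : (2 * E - 1 - (E - 1) * s) * (log E - log (E - (E - 1) * s)) ≤
            s * (c * (E - 2) + E - 1) :=
          le_of_mul_le_mul_left (by linarith) hE0
        rw [← sub_nonneg]
        field_simp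
        linarith

lemma csrRatio_recipMeasure_le (hδ : δ ∈ Ico 0 1) (hc : 0 < c) (hce : exp c = 1 + 2 * c)
    (hlogE : log E = c / (1 - δ)) (hE : 1 + 2 * c ≤ E) {s : ℝ} (hs : 0 < s) :
    csrRatio δ (recipMeasure E) s ≤ 2 - 1 / (E - 1) := by
  have hE0 : 0 < E - 1 := by linarith
  rw [csrRatio]
  by_cases hreg : (1 + 2 * c) * (E - (E - 1) * min s 1) ≤ E
  · rw [cvar_csrCost_recipMeasure_of_le hδ hc hce hlogE (by linarith) hs hreg,
      div_le_iff₀ (lt_min hs one_pos)]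
    have : 1 / (E - 1) * min s 1 ≤ 1 / (E - 1) :=
      mul_le_of_le_one_right (by positivity) (min_le_right s 1)
    linarith
  · have hs1 : s < 1 := by
      by_contra! h
      rw [min_eq_right h] at hreg
      exact hreg (by linarith)
    rw [min_eq_left hs1.le] at hreg ⊢
    rw [div_le_iff₀ hs]
    exact cvar_csrCost_recipMeasure_le hδ hc hce hlogE hE hs hs1.le (not_le.1 hreg).le

lemma csrRatio_recipMeasure_one (hδ : δ ∈ Ico 0 1) (hc : 0 < c) (hce : exp c = 1 + 2 * c)
    (hlogE : log E = c / (1 - δ)) (hE : 1 + 2 * c ≤ E) :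
    csrRatio δ (recipMeasure E) 1 = 2 - 1 / (E - 1) := by
  rw [csrRatio, min_self, div_one, cvar_csrCost_recipMeasure_of_le hδ hc hce hlogE (by linarith)
    one_pos (by rw [min_self, mul_one]; linarith), min_self, mul_one]

lemma csrCR_recipMeasure (hδ : δ ∈ Ico 0 1) (hc : 0 < c) (hce : exp c = 1 + 2 * c)
    (hlogE : log E = c / (1 - δ)) (hE : 1 + 2 * c ≤ E) :
    csrCR δ (recipMeasure E) = 2 - 1 / (E - 1) := by
  have : Nonempty (Ioi (0 : ℝ)) := ⟨⟨1, mem_Ioi.2 one_pos⟩⟩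
  refine ciSup_eq_of_forall_le_of_forall_lt_exists_gt
    (fun s => csrRatio_recipMeasure_le hδ hc hce hlogE hE s.2) fun w hw =>
      ⟨⟨1, mem_Ioi.2 one_pos⟩, ?_⟩
  rwa [csrRatio_recipMeasure_one hδ hc hce hlogE hE]

end RecipStrategy

/-- Theorem 3: the explicit density `p_δ` yields `δ`-CVaR competitive ratio
`2 - 1/(e^{c/(1-δ)} - 1) < 2`; in particular the optimal ratio is below 2. -/
theorem cvar_skirental_firstalg (δ c : ℝ) (hδ : δ ∈ Ico (0:ℝ) 1)
    (hc : 0 < c) (hce : Real.exp c = 1 + 2 * c) :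
    ∀ μ : Measure ℝ,
      μ = (volume.restrict (Icc (0:ℝ) 1)).withDensity
            (fun x => ENNReal.ofReal
              ((1 - δ) * (1 - Real.exp (c / (1 - δ)))
                / (c * (Real.exp (c / (1 - δ)) * (x - 1) - x)))) →
      csrCR δ μ = 2 - 1 / (Real.exp (c / (1 - δ)) - 1) ∧
      csrCR δ μ < 2 ∧ csrOpt δ < 2 := by
  rintro μ rfl
  set E := exp (c / (1 - δ))
  have hβ : 0 < 1 - δ := by linarith [hδ.2]
  have hlogE : log E = c / (1 - δ) := log_exp _
  have hE : 1 + 2 * c ≤ E := hce ▸ exp_le_exp.2 (le_div_self hc.le hβ (by linarith [hδ.1]))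
  have hdensity : ∀ x, (1 - δ) * (1 - E) / (c * (E * (x - 1) - x)) = recipDensity E x := by
    intro x
    rw [recipDensity, hlogE, div_mul_eq_mul_div, div_div_eq_mul_div, mul_comm (E - 1),
      ← neg_div_neg_eq]
    congr 1 <;> ring
  simp_rw [hdensity]
  rw [← recipMeasure, csrCR_recipMeasure hδ hc hce hlogE hE]
  have hlt : 2 - 1 / (E - 1) < 2 := sub_lt_self 2 (one_div_pos.2 (by linarith))
  have := isProbabilityMeasure_recipMeasure (E := E) (by linarith)
  exact ⟨rfl, hlt, (csrOpt_le_csrCR hδ _ recipMeasure_Iio_zero).trans_lt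
    ((csrCR_recipMeasure hδ hc hce hlogE hE).trans_lt hlt)⟩
end

section
/- Let B ≥ 2 be an integer and let δ ∈ [0,1] satisfy δ ≥ 1 − 1/(2·⌊log₂ B⌋ + 1). Then the optimal δ-CVaR competitive ratio for discrete-time ski rental with buying cost B equals the deterministic optimum: α_δ^{B,*} = 2 − 1/B, attained by the deterministic strategy that purchases at the start of day B. -/
open Finset Set

/-- Conditional value-at-risk (loss version) of a discrete random variable: the strategy
`p` is a probability vector over `Fin n`, `f` gives the loss of each outcome. For
`δ ∈ [0,1)` it is `inf_t { t + (1-δ)⁻¹ Σ_i p_i max(f_i - t, 0) }`; for `δ = 1` it is the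
maximum loss over the support of `p`. -/
noncomputable def dcvar {n : ℕ} (δ : ℝ) (p : Fin n → ℝ) (f : Fin n → ℝ) : ℝ :=
  if δ = 1 then ⨆ i : {i : Fin n // p i ≠ 0}, f i
  else ⨅ t : ℝ, t + (1 - δ)⁻¹ * ∑ i, p i * max (f i - t) 0

/-- Discrete-time ski rental cost with buying cost `B`: purchase at the start of day
`x+1`, season lasts `s+1` days (indices in `Fin B` represent days `1,…,B`). The cost is
`s` if the player never buys, and `B + x` (i.e. `B + day - 1`) if it buys. -/
noncomputable def dsrCost (B : ℕ) (s x : Fin B) : ℝ :=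
  if (x : ℕ) ≤ (s : ℕ) then (B : ℝ) + (x : ℕ) else (s : ℕ) + 1

lemma dcvar_pointwise {n : ℕ} {δ : ℝ} {p f : Fin n → ℝ} (hδ0 : 0 ≤ δ) (hδ1 : δ < 1)
    (hp : ∀ i, 0 ≤ p i) {y : ℝ}
    (h1 : 1 - δ ≤ ∑ i ∈ univ.filter (fun i => y ≤ f i), p i) (t : ℝ) :
    y ≤ t + (1 - δ)⁻¹ * ∑ i, p i * max (f i - t) 0 := by
  have hε : 0 < 1 - δ := by linarith
  have hterm : ∀ i, 0 ≤ p i * max (f i - t) 0 := fun i =>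
    mul_nonneg (hp i) (le_max_right _ _)
  rcases le_or_gt y t with h | h
  · have : 0 ≤ (1 - δ)⁻¹ * ∑ i, p i * max (f i - t) 0 :=
      mul_nonneg (inv_nonneg.mpr hε.le) (Finset.sum_nonneg fun i _ => hterm i)
    linarith
  · have hsum : (1 - δ) * (y - t) ≤ ∑ i, p i * max (f i - t) 0 := by
      calc (1 - δ) * (y - t) ≤ (∑ i ∈ univ.filter (fun i => y ≤ f i), p i) * (y - t) := by
            apply mul_le_mul_of_nonneg_right h1 (by linarith)
        _ = ∑ i ∈ univ.filter (fun i => y ≤ f i), p i * (y - t) := by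
            rw [Finset.sum_mul]
        _ ≤ ∑ i ∈ univ.filter (fun i => y ≤ f i), p i * max (f i - t) 0 := by
            apply Finset.sum_le_sum
            intro i hi
            rw [Finset.mem_filter] at hi
            exact mul_le_mul_of_nonneg_left (le_max_of_le_left (by linarith [hi.2])) (hp i)
        _ ≤ ∑ i, p i * max (f i - t) 0 :=
            Finset.sum_le_sum_of_subset_of_nonneg (Finset.filter_subset _ _)
              (fun i _ _ => hterm i)
    have : (1 - δ)⁻¹ * ((1 - δ) * (y - t)) ≤ (1 - δ)⁻¹ * ∑ i, p i * max (f i - t) 0 :=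
      mul_le_mul_of_nonneg_left hsum (inv_nonneg.mpr hε.le)
    rw [← mul_assoc, inv_mul_cancel₀ hε.ne', one_mul] at this
    linarith

lemma dcvar_ge {n : ℕ} {δ : ℝ} {p f : Fin n → ℝ} (hδ0 : 0 ≤ δ) (hδ1 : δ ≤ 1)
    (hp : ∀ i, 0 ≤ p i) {y : ℝ}
    (h1 : 1 - δ ≤ ∑ i ∈ univ.filter (fun i => y ≤ f i), p i)
    (h2 : 0 < ∑ i ∈ univ.filter (fun i => y ≤ f i), p i) :
    y ≤ dcvar δ p f := by
  unfold dcvar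
  by_cases hδ : δ = 1
  · rw [if_pos hδ]
    obtain ⟨i, hi, hfi⟩ : ∃ i, y ≤ f i ∧ p i ≠ 0 := by
      by_contra hc
      push_neg at hc
      have : ∑ i ∈ univ.filter (fun i => y ≤ f i), p i = 0 := by
        apply Finset.sum_eq_zero
        intro i hi
        rw [Finset.mem_filter] at hi
        exact hc i hi.2
      simp [this] at h2
    calc y ≤ f i := hi
      _ ≤ ⨆ i : {i : Fin n // p i ≠ 0}, f i :=
          le_ciSup (f := fun i : {i : Fin n // p i ≠ 0} => f i)
            (Set.Finite.bddAbove (Set.finite_range _)) ⟨i, hfi⟩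
  · rw [if_neg hδ]
    exact le_ciInf (dcvar_pointwise hδ0 (lt_of_le_of_ne hδ1 hδ) hp h1)

lemma dcvar_det {n : ℕ} {δ : ℝ} (hδ0 : 0 ≤ δ) (hδ1 : δ ≤ 1) (i0 : Fin n) (f : Fin n → ℝ) :
    dcvar δ (fun i => if i = i0 then 1 else 0) f = f i0 := by
  set p : Fin n → ℝ := fun i => if i = i0 then 1 else 0 with hpdef
  have hp : ∀ i, 0 ≤ p i := fun i => by simp [hpdef]; split <;> norm_num
  have hmem : i0 ∈ univ.filter (fun i => f i0 ≤ f i) := by simp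
  have hsumge : 1 ≤ ∑ i ∈ univ.filter (fun i => f i0 ≤ f i), p i := by
    have := Finset.single_le_sum (f := p) (fun i _ => hp i) hmem
    simpa [hpdef] using this
  have hge : f i0 ≤ dcvar δ p f :=
    dcvar_ge hδ0 hδ1 hp (by linarith) (by linarith)
  refine le_antisymm ?_ hge
  unfold dcvar
  by_cases hδ : δ = 1
  · rw [if_pos hδ]
    have hne : Nonempty {i : Fin n // p i ≠ 0} := ⟨⟨i0, by simp [hpdef]⟩⟩
    apply ciSup_le
    rintro ⟨i, hi⟩
    have : i = i0 := by
      by_contra hc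
      exact hi (by simp [hpdef, hc])
    simp [this]
  · rw [if_neg hδ]
    have hlt : δ < 1 := lt_of_le_of_ne hδ1 hδ
    have hbdd : BddBelow (Set.range fun t => t + (1 - δ)⁻¹ * ∑ i, p i * max (f i - t) 0) := by
      refine ⟨f i0, ?_⟩
      rintro x ⟨t, rfl⟩
      exact dcvar_pointwise hδ0 hlt hp (by linarith) t
    have := ciInf_le hbdd (f i0)
    calc (⨅ t : ℝ, t + (1 - δ)⁻¹ * ∑ i, p i * max (f i - t) 0)
        ≤ f i0 + (1 - δ)⁻¹ * ∑ i, p i * max (f i - f i0) 0 := this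
      _ = f i0 := by
          have : ∑ i, p i * max (f i - f i0) 0 
              = ∑ i, (if i = i0 then max (f i - f i0) 0 else 0) := by
            apply Finset.sum_congr rfl
            intro i _
            simp only [hpdef]
            split <;> simp
          rw [this, Finset.sum_ite_eq' univ i0]
          simp

def dsrSeq (B : ℕ) : ℕ → ℕ
  | 0 => 0
  | j+1 => B * (B + dsrSeq B j) / (2*B - 1)

variable {B : ℕ}

lemma dsrSeq_le (hB : 2 ≤ B) : ∀ j, dsrSeq B j ≤ B := by
  intro j
  induction j with
  | zero => simp [dsrSeq]
  | succ j ih =>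
    show B * (B + dsrSeq B j) / (2*B - 1) ≤ B
    revert ih
    generalize dsrSeq B j = s
    intro hs
    obtain ⟨C, hC⟩ : ∃ C, B = C + 1 := ⟨B - 1, by omega⟩
    subst hC
    have h2B : 2*(C+1) - 1 = 2*C + 1 := by omega
    rw [← Nat.lt_succ_iff, Nat.div_lt_iff_lt_mul (by omega), h2B]
    nlinarith [hs]

lemma dsrSeq_mono (hB : 2 ≤ B) (j : ℕ) : dsrSeq B j ≤ dsrSeq B (j+1) := by
  show dsrSeq B j ≤ B * (B + dsrSeq B j) / (2*B - 1)
  have hs0 : dsrSeq B j ≤ B := dsrSeq_le hB j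
  revert hs0
  generalize dsrSeq B j = s
  intro hs
  obtain ⟨C, hC⟩ : ∃ C, B = C + 1 := ⟨B - 1, by omega⟩
  subst hC
  have h2B : 2*(C+1) - 1 = 2*C + 1 := by omega
  rw [Nat.le_div_iff_mul_le (by omega), h2B]
  nlinarith [hs]

lemma dsrSeq_mono' (hB : 2 ≤ B) {i j : ℕ} (h : i ≤ j) : dsrSeq B i ≤ dsrSeq B j := by
  induction j with
  | zero => have : i = 0 := by omega
            simp [this]
  | succ j ih =>
    rcases Nat.lt_or_ge i (j+1) with h' | h'
    · exact le_trans (ih (by omega)) (dsrSeq_mono hB j)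
    · have : i = j + 1 := by omega
      exact this ▸ le_refl _

lemma dsrSeq_chain (j : ℕ) : (2*B - 1) * dsrSeq B (j+1) ≤ B * (B + dsrSeq B j) := by
  rw [mul_comm]
  exact Nat.div_mul_le_self _ _

lemma dsrSeq_halve (hB : 2 ≤ B) (j : ℕ) :
    B - dsrSeq B (j+1) ≤ (B - dsrSeq B j + 1) / 2 := by
  set s := dsrSeq B j with hs
  have hsB : s ≤ B := dsrSeq_le hB j
  set d := B - s with hd
  set h := (d + 1) / 2 with hh
  suffices hsuff : B - h ≤ B * (B + s) / (2*B - 1) by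
    show B - B * (B + s) / (2*B - 1) ≤ h
    omega
  rw [Nat.le_div_iff_mul_le (by omega)]
  obtain ⟨e, he⟩ : ∃ e, B = h + e := ⟨B - h, by omega⟩
  have hesh : e ≤ s + h := by omega
  have h1 : e * e ≤ (s + h) * e := Nat.mul_le_mul_right e hesh
  have h2 : h * e ≤ h * (s + h) := Nat.mul_le_mul_left h hesh
  have hBh : B - h = e := by omega
  rw [hBh]
  have hc : 2 * B - 1 + 1 = 2 * (h + e) := by omega
  have key : e * (2 * B - 1 + 1) ≤ B * (B + s) + e := by
    rw [hc, he]; nlinarith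
  have heq : e * (2 * B - 1) + e = e * (2 * B - 1 + 1) := by ring
  linarith [key, heq]

lemma dsrSeq_pow (hB : 2 ≤ B) (j : ℕ) : 2^j * (B - dsrSeq B j) < B + 2^j := by
  induction j with
  | zero => simp [dsrSeq]
  | succ j ih =>
    have hhalf := dsrSeq_halve hB j
    have h2 : 2 * (B - dsrSeq B (j+1)) ≤ B - dsrSeq B j + 1 := by omega
    calc 2^(j+1) * (B - dsrSeq B (j+1)) = 2^j * (2 * (B - dsrSeq B (j+1))) := by ring
      _ ≤ 2^j * (B - dsrSeq B j + 1) := Nat.mul_le_mul_left _ h2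
      _ = 2^j * (B - dsrSeq B j) + 2^j := by ring
      _ < B + 2^j + 2^j := by omega
      _ = B + 2^(j+1) := by ring

lemma dsrSeq_top (hB : 2 ≤ B) : dsrSeq B (Nat.log 2 B + 2) = B := by
  set k := Nat.log 2 B with hk
  have hpow : B < 2^(k+1) := Nat.lt_pow_succ_log_self (by norm_num) B
  have hp := dsrSeq_pow hB (k+1)
  have hd : B - dsrSeq B (k+1) ≤ 1 := by
    by_contra hc
    push_neg at hc
    have : 2^(k+1) * 2 ≤ 2^(k+1) * (B - dsrSeq B (k+1)) := Nat.mul_le_mul_left _ hc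
    omega
  have hs1 : B - 1 ≤ dsrSeq B (k+1) := by
    have := dsrSeq_le hB (k+1); omega
  have hge : B ≤ dsrSeq B (k+2) := by
    show B ≤ B * (B + dsrSeq B (k+1)) / (2*B - 1)
    rw [Nat.le_div_iff_mul_le (by omega)]
    have : 2*B - 1 ≤ B + dsrSeq B (k+1) := by omega
    calc B * (2*B - 1) ≤ B * (B + dsrSeq B (k+1)) := Nat.mul_le_mul_left _ this
      _ = B * (B + dsrSeq B (k+1)) := rfl
  have := dsrSeq_le hB (k+2)
  omega

lemma dsrSeq_cover (hB : 2 ≤ B) (x : ℕ) :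
    ∀ m, x < dsrSeq B m → ∃ j, j < m ∧ dsrSeq B j ≤ x ∧ x < dsrSeq B (j+1) := by
  intro m
  induction m with
  | zero => simp [dsrSeq]
  | succ m ih =>
    intro hx
    rcases Nat.lt_or_ge x (dsrSeq B m) with h | h
    · obtain ⟨j, hj1, hj2, hj3⟩ := ih h
      exact ⟨j, by omega, hj2, hj3⟩
    · exact ⟨m, by omega, h, hx⟩

/-- `δ`-CVaR competitive ratio of strategy `p` at adversary decision (season length) `s`. -/
noncomputable def dsrRatio (δ : ℝ) (B : ℕ) (p : Fin B → ℝ) (s : Fin B) : ℝ :=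
  dcvar δ p (dsrCost B s) / min ((s : ℕ) + 1 : ℝ) (B : ℝ)

/-- `δ`-CVaR competitive ratio of strategy `p`: worst case over adversary decisions. -/
noncomputable def dsrCR (δ : ℝ) (B : ℕ) (p : Fin B → ℝ) : ℝ :=
  ⨆ s : Fin B, dsrRatio δ B p s

/-- Optimal `δ`-CVaR competitive ratio over all strategies (probability vectors on `[B]`). -/
noncomputable def dsrOpt (δ : ℝ) (B : ℕ) : ℝ :=
  ⨅ p : {q : Fin B → ℝ // (∀ i, 0 ≤ q i) ∧ ∑ i, q i = 1}, dsrCR δ B (p : Fin B → ℝ)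

lemma dsrCR_det (B : ℕ) (hB : 2 ≤ B) {δ : ℝ} (hδ0 : 0 ≤ δ) (hδ1 : δ ≤ 1) :
    dsrCR δ B (fun i => if (i : ℕ) = B - 1 then 1 else 0) = 2 - 1 / B := by
  have hB0 : (0:ℝ) < B := by exact_mod_cast Nat.lt_of_lt_of_le (by norm_num) hB
  set i0 : Fin B := ⟨B-1, by omega⟩ with hi0
  haveI : Nonempty (Fin B) := ⟨i0⟩
  have hpeq : (fun i : Fin B => if (i:ℕ) = B-1 then (1:ℝ) else 0)
      = (fun i => if i = i0 then (1:ℝ) else 0) := by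
    funext i
    by_cases h : (i:ℕ) = B - 1
    · rw [if_pos h, if_pos (by exact Fin.ext h)]
    · rw [if_neg h, if_neg (by intro hc; exact h (by rw [hc]))]
  have hone : (1:ℝ) ≤ 2 - 1/(B:ℝ) := by
    have : 1/(B:ℝ) ≤ 1 := by
      rw [div_le_one hB0]; exact_mod_cast Nat.le_of_lt (by omega)
    linarith
  have hcast : ((B-1:ℕ):ℝ) = (B:ℝ) - 1 := by
    rw [Nat.cast_sub (by omega)]; norm_num
  have hratio : ∀ s : Fin B, dsrRatio δ B (fun i => if (i:ℕ) = B-1 then (1:ℝ) else 0) s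
      = if s = i0 then 2 - 1/(B:ℝ) else 1 := by
    intro s
    rw [dsrRatio, hpeq, dcvar_det hδ0 hδ1]
    by_cases hs : s = i0
    · rw [if_pos hs, hs]
      have h1 : dsrCost B i0 i0 = (B:ℝ) + ((B-1:ℕ):ℝ) := by
        rw [dsrCost, if_pos (le_refl _)]
      have h2 : ((i0:ℕ):ℝ) + 1 = (B:ℝ) := by
        show ((B-1:ℕ):ℝ) + 1 = (B:ℝ)
        rw [hcast]; ring
      rw [h1, h2, min_self, hcast]
      field_simp
      ring
    · rw [if_neg hs]
      have hsℕ : (s:ℕ) < B - 1 := by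
        have h1 : (s:ℕ) < B := s.isLt
        have h2 : (s:ℕ) ≠ B - 1 := fun hc => hs (Fin.ext hc)
        omega
      have h1 : dsrCost B s i0 = ((s:ℕ):ℝ) + 1 := by
        rw [dsrCost, if_neg (by show ¬ ((i0:ℕ) ≤ (s:ℕ)); show ¬ (B-1 ≤ (s:ℕ)); omega)]
      have h2 : min (((s:ℕ):ℝ) + 1) (B:ℝ) = ((s:ℕ):ℝ) + 1 := by
        apply min_eq_left
        have : (s:ℕ) + 1 ≤ B := by omega
        exact_mod_cast this
      rw [h1, h2, div_self (by positivity)]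
  rw [dsrCR]
  apply le_antisymm
  · apply ciSup_le
    intro s
    rw [hratio s]
    split
    · exact le_refl _
    · exact hone
  · have := le_ciSup (f := fun s => dsrRatio δ B (fun i : Fin B => if (i:ℕ) = B-1 then (1:ℝ) else 0) s)
      (Set.Finite.bddAbove (Set.finite_range _)) i0
    rw [hratio i0, if_pos rfl] at this
    exact this

lemma dsrCR_lower (B : ℕ) (hB : 2 ≤ B) {δ : ℝ} (hδ0 : 0 ≤ δ) (hδ1 : δ ≤ 1)
    (hlarge : 1 - 1 / (2 * (Nat.log 2 B : ℝ) + 1) ≤ δ)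
    (p : Fin B → ℝ) (hp0 : ∀ i, 0 ≤ p i) (hp1 : ∑ i, p i = 1) :
    2 - 1 / B ≤ dsrCR δ B p := by
  classical
  have hB0 : (0:ℝ) < B := by exact_mod_cast Nat.lt_of_lt_of_le (by norm_num) hB
  set k := Nat.log 2 B with hk
  have hk1 : 1 ≤ k := Nat.log_pos (by norm_num) hB
  set m := k + 2 with hm
  set E : ℕ → Finset (Fin B) :=
    fun j => univ.filter (fun x => dsrSeq B j ≤ (x:ℕ) ∧ (x:ℕ) < dsrSeq B (j+1)) with hE
  have hcover : (univ : Finset (Fin B)) ⊆ (Finset.range m).biUnion E := by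
    intro x _
    have hx : (x:ℕ) < dsrSeq B m := by rw [hm, dsrSeq_top hB]; exact x.isLt
    obtain ⟨j, hj, h1, h2⟩ := dsrSeq_cover hB (x:ℕ) m hx
    rw [Finset.mem_biUnion]
    exact ⟨j, Finset.mem_range.mpr hj, by simp [hE, h1, h2]⟩
  have hdisjkey : ∀ i j : ℕ, i < j → Disjoint (E i) (E j) := by
    intro i j hij
    rw [Finset.disjoint_left]
    intro x hxi hxj
    rw [hE, Finset.mem_filter] at hxi hxj
    have := dsrSeq_mono' hB (show i+1 ≤ j from hij)
    omega
  have hdisj : (↑(Finset.range m) : Set ℕ).PairwiseDisjoint E := by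
    intro i _ j _ hij
    rcases lt_or_gt_of_ne hij with h | h
    · exact hdisjkey i j h
    · exact (hdisjkey j i h).symm
  have hsum1 : (1:ℝ) ≤ ∑ j ∈ Finset.range m, ∑ x ∈ E j, p x := by
    rw [← Finset.sum_biUnion hdisj, ← hp1]
    exact Finset.sum_le_sum_of_subset_of_nonneg hcover (fun i _ _ => hp0 i)
  have hmpos : (0:ℝ) < (m:ℝ) := by positivity
  have hpig : ∃ j ∈ Finset.range m, (1:ℝ)/(m:ℝ) ≤ ∑ x ∈ E j, p x := by
    apply Finset.exists_le_of_sum_le ⟨0, Finset.mem_range.mpr (by omega)⟩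
    calc ∑ _j ∈ Finset.range m, (1:ℝ)/(m:ℝ) = (m:ℝ) * (1/(m:ℝ)) := by
          rw [Finset.sum_const, Finset.card_range, nsmul_eq_mul]
      _ = 1 := by field_simp
      _ ≤ _ := hsum1
  obtain ⟨j, hjm, hPj⟩ := hpig
  set S := dsrSeq B (j+1) with hS
  have hSB : S ≤ B := dsrSeq_le hB (j+1)
  have hPpos : (0:ℝ) < ∑ x ∈ E j, p x := lt_of_lt_of_le (by positivity) hPj
  have hEne : (E j).Nonempty := by
    by_contra h
    rw [Finset.not_nonempty_iff_eq_empty] at h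
    rw [h, Finset.sum_empty] at hPpos
    exact lt_irrefl _ hPpos
  obtain ⟨x0, hx0⟩ := hEne
  have hS1 : 1 ≤ S := by
    rw [hE, Finset.mem_filter] at hx0
    omega
  set s : Fin B := ⟨S - 1, by omega⟩ with hsdef
  have hsS : (s:ℕ) + 1 = S := by show S - 1 + 1 = S; omega
  have hδm : 1 - δ ≤ ∑ x ∈ E j, p x := by
    have h2k1 : (0:ℝ) < 2*(k:ℝ)+1 := by positivity
    have h2k : 1 - δ ≤ 1 / (2*(k:ℝ)+1) := by linarith [hlarge]
    have hmle : (m:ℝ) ≤ 2*(k:ℝ)+1 := by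
      rw [hm]
      push_cast
      have : (1:ℝ) ≤ (k:ℝ) := by exact_mod_cast hk1
      linarith
    have : (1:ℝ)/(2*(k:ℝ)+1) ≤ 1/(m:ℝ) := by
      apply one_div_le_one_div_of_le hmpos hmle
    linarith
  have hchain := dsrSeq_chain (B := B) j
  have hy : ∀ x ∈ E j, (2 - 1/(B:ℝ)) * (S:ℝ) ≤ dsrCost B s x := by
    intro x hx
    rw [hE, Finset.mem_filter] at hx
    obtain ⟨-, hx1, hx2⟩ := hx
    have hxs : (x:ℕ) ≤ (s:ℕ) := by show (x:ℕ) ≤ S - 1; omega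
    rw [dsrCost, if_pos hxs]
    have hc : ((2*B-1:ℕ):ℝ) * (S:ℝ) ≤ (B:ℝ) * ((B:ℝ) + (dsrSeq B j : ℝ)) := by
      have := hchain
      have hcast : (((2*B-1) * dsrSeq B (j+1) : ℕ):ℝ) ≤ ((B * (B + dsrSeq B j) : ℕ):ℝ) := by
        exact_mod_cast this
      push_cast at hcast ⊢
      linarith
    have hc2 : ((2*B-1:ℕ):ℝ) = 2*(B:ℝ)-1 := by
      rw [Nat.cast_sub (by omega)]; push_cast; ring
    rw [hc2] at hc
    have heq : (2 - 1/(B:ℝ)) * (S:ℝ) = ((2*(B:ℝ)-1) * (S:ℝ))/(B:ℝ) := by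
      rw [eq_div_iff hB0.ne']
      field_simp
    rw [heq, div_le_iff₀ hB0]
    have hxj : ((dsrSeq B j : ℕ):ℝ) ≤ ((x:ℕ):ℝ) := by exact_mod_cast hx1
    nlinarith
  have hsublemma : ∀ (c : ℝ), (∀ x ∈ E j, c ≤ dsrCost B s x) →
      ∑ x ∈ E j, p x ≤ ∑ x ∈ univ.filter (fun x => c ≤ dsrCost B s x), p x := by
    intro c hc
    apply Finset.sum_le_sum_of_subset_of_nonneg
    · intro x hx
      rw [Finset.mem_filter]
      exact ⟨Finset.mem_univ x, hc x hx⟩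
    · exact fun i _ _ => hp0 i
  have hcvar : (2 - 1/(B:ℝ)) * (S:ℝ) ≤ dcvar δ p (dsrCost B s) := by
    apply dcvar_ge hδ0 hδ1 hp0
    · exact le_trans hδm (hsublemma _ hy)
    · exact lt_of_lt_of_le hPpos (hsublemma _ hy)
  have hSpos : (0:ℝ) < (S:ℝ) := by exact_mod_cast hS1
  have hmin : min (((s:ℕ):ℝ)+1) (B:ℝ) = (S:ℝ) := by
    have h1 : ((s:ℕ):ℝ) + 1 = (S:ℝ) := by exact_mod_cast hsS
    rw [h1]
    exact min_eq_left (by exact_mod_cast hSB)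
  have hratio : 2 - 1/(B:ℝ) ≤ dsrRatio δ B p s := by
    rw [dsrRatio, hmin, le_div_iff₀ hSpos]
    exact hcvar
  calc 2 - 1/(B:ℝ) ≤ dsrRatio δ B p s := hratio
    _ ≤ dsrCR δ B p := le_ciSup (Set.Finite.bddAbove (Set.finite_range _)) s

/-- Theorem 6(ii): for `δ ≥ 1 - 1/(2⌊log₂ B⌋ + 1)` the optimal `δ`-CVaR competitive ratio
for discrete-time ski rental equals the deterministic optimum `2 - 1/B`, attained by the
deterministic strategy that purchases at the start of day `B`. -/
theorem dsr_phase_transition_ii (B : ℕ) (hB : 2 ≤ B) (δ : ℝ) (hδ : δ ∈ Icc (0:ℝ) 1)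
    (hlarge : 1 - 1 / (2 * (Nat.log 2 B : ℝ) + 1) ≤ δ) :
    dsrOpt δ B = 2 - 1 / B ∧
      dsrCR δ B (fun i => if (i : ℕ) = B - 1 then 1 else 0) = 2 - 1 / B := by
  obtain ⟨hδ0, hδ1⟩ := hδ
  have hdet := dsrCR_det B hB hδ0 hδ1
  have hdetp : (∀ i : Fin B, (0:ℝ) ≤ if (i:ℕ) = B - 1 then 1 else 0) ∧
      ∑ i : Fin B, (if (i:ℕ) = B - 1 then (1:ℝ) else 0) = 1 := by
    constructor
    · intro i; split <;> norm_num
    · set i0 : Fin B := ⟨B-1, by omega⟩ with hi0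
      have : ∀ i : Fin B, (if (i:ℕ) = B - 1 then (1:ℝ) else 0) = if i = i0 then 1 else 0 := by
        intro i
        by_cases h : (i:ℕ) = B - 1
        · rw [if_pos h, if_pos (Fin.ext h)]
        · rw [if_neg h, if_neg (fun hc => h (by rw [hc]))]
      rw [Finset.sum_congr rfl (fun i _ => this i), Finset.sum_ite_eq' univ i0]
      simp
  refine ⟨?_, hdet⟩
  have hlow : ∀ q : {q : Fin B → ℝ // (∀ i, 0 ≤ q i) ∧ ∑ i, q i = 1},
      2 - 1/(B:ℝ) ≤ dsrCR δ B (q : Fin B → ℝ) := by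
    rintro ⟨q, hq0, hq1⟩
    exact dsrCR_lower B hB hδ0 hδ1 hlarge q hq0 hq1
  haveI : Nonempty {q : Fin B → ℝ // (∀ i, 0 ≤ q i) ∧ ∑ i, q i = 1} :=
    ⟨⟨fun i => if (i:ℕ) = B - 1 then 1 else 0, hdetp⟩⟩
  apply le_antisymm
  · have h := ciInf_le (f := fun q : {q : Fin B → ℝ // (∀ i, 0 ≤ q i) ∧ ∑ i, q i = 1} =>
      dsrCR δ B (q : Fin B → ℝ))
      ⟨2 - 1/(B:ℝ), by rintro x ⟨q, rfl⟩; exact hlow q⟩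
      ⟨fun i => if (i:ℕ) = B - 1 then 1 else 0, hdetp⟩
    rw [dsrOpt]
    exact le_trans h (le_of_eq hdet)
  · rw [dsrOpt]
    exact le_ciInf hlow
end

section
/- Let B ≥ 2 be an integer and δ ∈ [0,1) be such that the optimal δ-CVaR competitive ratio for discrete-time ski rental with buying cost B satisfies α_δ^{B,*} < 2 − 1/B, and let p* be a strategy attaining α_δ^{B,p*} = α_δ^{B,*}. Then the adversary is indifferent to its chosen ski season duration: α_δ^{B,p*}(i) = α_δ^{B,*} for all i ∈ [B]. -/
open Finset Set

namespace DSRaux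

noncomputable def gfun (δ : ℝ) {n : ℕ} (q f : Fin n → ℝ) (t : ℝ) : ℝ :=
  t + (1 - δ)⁻¹ * ∑ i, q i * max (f i - t) 0

section basic

variable {n : ℕ} {δ : ℝ} {q f : Fin n → ℝ}

lemma inv_one_minus_ge_one (hδ0 : 0 ≤ δ) (hδ1 : δ < 1) : (1:ℝ) ≤ (1 - δ)⁻¹ := by
  have h1 : (0:ℝ) < 1 - δ := by linarith
  rw [le_inv_comm₀ one_pos h1]
  simpa using hδ0

lemma gfun_ge_E (hδ0 : 0 ≤ δ) (hδ1 : δ < 1) (hq0 : ∀ i, 0 ≤ q i)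
    (hq1 : ∑ i, q i = 1) (t : ℝ) : (∑ i, q i * f i) ≤ gfun δ q f t := by
  have hinv : (1:ℝ) ≤ (1 - δ)⁻¹ := inv_one_minus_ge_one hδ0 hδ1
  have hS0 : 0 ≤ ∑ i, q i * max (f i - t) 0 := by
    apply Finset.sum_nonneg
    intro i _
    exact mul_nonneg (hq0 i) (le_max_right _ _)
  have hS1 : ∑ i, q i * (f i - t) ≤ ∑ i, q i * max (f i - t) 0 := by
    apply Finset.sum_le_sum
    intro i _
    exact mul_le_mul_of_nonneg_left (le_max_left _ _) (hq0 i)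
  have hE : ∑ i, q i * (f i - t) = (∑ i, q i * f i) - t := by
    have hc : ∀ i ∈ Finset.univ, q i * (f i - t) = q i * f i - q i * t :=
      fun i _ => by ring
    rw [Finset.sum_congr rfl hc, Finset.sum_sub_distrib, ← Finset.sum_mul, hq1, one_mul]
  have : (∑ i, q i * f i) - t ≤ (1 - δ)⁻¹ * ∑ i, q i * max (f i - t) 0 := by
    calc (∑ i, q i * f i) - t = ∑ i, q i * (f i - t) := hE.symm
      _ ≤ ∑ i, q i * max (f i - t) 0 := hS1
      _ ≤ (1 - δ)⁻¹ * ∑ i, q i * max (f i - t) 0 := by nlinarith [hS0]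
  unfold gfun
  linarith

lemma bddBelow_gfun (hδ0 : 0 ≤ δ) (hδ1 : δ < 1) (hq0 : ∀ i, 0 ≤ q i)
    (hq1 : ∑ i, q i = 1) : BddBelow (Set.range (gfun δ q f)) := by
  refine ⟨∑ i, q i * f i, ?_⟩
  rintro x ⟨t, rfl⟩
  exact gfun_ge_E hδ0 hδ1 hq0 hq1 t

lemma dcvar_eq_iInf (hδ1 : δ < 1) : dcvar δ q f = ⨅ t : ℝ, gfun δ q f t := by
  rw [dcvar, if_neg (by linarith : δ ≠ 1)]
  rfl

lemma dcvar_le_gfun (hδ0 : 0 ≤ δ) (hδ1 : δ < 1) (hq0 : ∀ i, 0 ≤ q i)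
    (hq1 : ∑ i, q i = 1) (t : ℝ) : dcvar δ q f ≤ gfun δ q f t := by
  rw [dcvar_eq_iInf hδ1]
  exact ciInf_le (bddBelow_gfun hδ0 hδ1 hq0 hq1) t

lemma E_le_dcvar (hδ0 : 0 ≤ δ) (hδ1 : δ < 1) (hq0 : ∀ i, 0 ≤ q i)
    (hq1 : ∑ i, q i = 1) : (∑ i, q i * f i) ≤ dcvar δ q f := by
  rw [dcvar_eq_iInf hδ1]
  exact le_ciInf (gfun_ge_E hδ0 hδ1 hq0 hq1)

lemma exists_gfun_lt (hδ1 : δ < 1) {η : ℝ} (hη : 0 < η) :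
    ∃ t : ℝ, gfun δ q f t < dcvar δ q f + η := by
  have h : (⨅ t : ℝ, gfun δ q f t) < dcvar δ q f + η := by
    rw [← dcvar_eq_iInf hδ1]; linarith
  exact exists_lt_of_ciInf_lt h

lemma gfun_mono_above (hδ0 : 0 ≤ δ) (hδ1 : δ < 1) (hq0 : ∀ i, 0 ≤ q i)
    {v t : ℝ} (hvt : v ≤ t)
    (htail : ∑ i ∈ Finset.univ.filter (fun i => v < f i), q i ≤ 1 - δ) :
    gfun δ q f v ≤ gfun δ q f t := by
  have h1 : (0:ℝ) < 1 - δ := by linarith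
  have key : ∑ i, q i * max (f i - v) 0 - ∑ i, q i * max (f i - t) 0
      ≤ (t - v) * (1 - δ) := by
    have hpt : ∀ i ∈ Finset.univ, q i * max (f i - v) 0 - q i * max (f i - t) 0
        ≤ q i * ((t - v) * (if v < f i then 1 else 0)) := by
      intro i _
      by_cases hf : v < f i
      · simp only [if_pos hf, mul_one]
        have h2 : max (f i - v) 0 = f i - v := max_eq_left (by linarith)
        have h3 : f i - t ≤ max (f i - t) 0 := le_max_left _ _
        have := hq0 i
        nlinarith
      · simp only [if_neg hf, mul_zero, mul_zero]
        have h2 : max (f i - v) 0 = 0 := max_eq_right (by push_neg at hf; linarith)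
        have h3 : 0 ≤ max (f i - t) 0 := le_max_right _ _
        have := hq0 i
        nlinarith
    calc ∑ i, q i * max (f i - v) 0 - ∑ i, q i * max (f i - t) 0
        = ∑ i, (q i * max (f i - v) 0 - q i * max (f i - t) 0) := by
          rw [Finset.sum_sub_distrib]
      _ ≤ ∑ i, q i * ((t - v) * (if v < f i then 1 else 0)) := Finset.sum_le_sum hpt
      _ = (t - v) * ∑ i ∈ Finset.univ.filter (fun i => v < f i), q i := by
          rw [Finset.sum_filter, Finset.mul_sum]
          congr 1
          ext i
          by_cases hf : v < f i <;> simp [hf] <;> ring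
      _ ≤ (t - v) * (1 - δ) := by
          apply mul_le_mul_of_nonneg_left htail (by linarith)
  have hinv0 : 0 ≤ (1 - δ)⁻¹ := by positivity
  have hmul : (1 - δ)⁻¹ * ((t - v) * (1 - δ)) = t - v := by
    field_simp
  unfold gfun
  have : (1 - δ)⁻¹ * (∑ i, q i * max (f i - v) 0 - ∑ i, q i * max (f i - t) 0)
      ≤ (1 - δ)⁻¹ * ((t - v) * (1 - δ)) := mul_le_mul_of_nonneg_left key hinv0
  rw [hmul] at this
  rw [mul_sub] at this
  linarith

lemma dcvar_ge_heavy (hδ0 : 0 ≤ δ) (hδ1 : δ < 1) (hq0 : ∀ i, 0 ≤ q i)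
    (i : Fin n) (hi : 1 - δ ≤ q i) : f i ≤ dcvar δ q f := by
  have h1 : (0:ℝ) < 1 - δ := by linarith
  rw [dcvar_eq_iInf hδ1]
  apply le_ciInf
  intro t
  have hsingle : q i * max (f i - t) 0 ≤ ∑ j, q j * max (f j - t) 0 := by
    apply Finset.single_le_sum (fun j _ => mul_nonneg (hq0 j) (le_max_right _ _))
      (Finset.mem_univ i)
  have hscale : max (f i - t) 0 ≤ (1 - δ)⁻¹ * (q i * max (f i - t) 0) := by
    have hm : 0 ≤ max (f i - t) 0 := le_max_right _ _
    have h2 : (1 - δ) * max (f i - t) 0 ≤ q i * max (f i - t) 0 :=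
      mul_le_mul_of_nonneg_right hi hm
    calc max (f i - t) 0 = (1 - δ)⁻¹ * ((1 - δ) * max (f i - t) 0) := by
          field_simp
      _ ≤ (1 - δ)⁻¹ * (q i * max (f i - t) 0) := by
          apply mul_le_mul_of_nonneg_left h2 (by positivity)
  have hmax : f i - t ≤ max (f i - t) 0 := le_max_left _ _
  have hS : (1 - δ)⁻¹ * (q i * max (f i - t) 0) ≤ (1 - δ)⁻¹ * ∑ j, q j * max (f j - t) 0 :=
    mul_le_mul_of_nonneg_left hsingle (by positivity)
  unfold gfun
  linarith

lemma gfun_perturb (δ : ℝ) (q q' f : Fin n → ℝ) (t : ℝ) :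
    gfun δ q' f t = gfun δ q f t
      + (1 - δ)⁻¹ * ∑ i, (q' i - q i) * max (f i - t) 0 := by
  unfold gfun
  have : ∑ i, (q' i - q i) * max (f i - t) 0
      = (∑ i, q' i * max (f i - t) 0) - ∑ i, q i * max (f i - t) 0 := by
    rw [← Finset.sum_sub_distrib]
    congr 1; ext i; ring
  rw [this]; ring

end basic

section maxlemmas

lemma own_term (a c t : ℝ) (h1 : a ≤ c - 1) (h2 : t ≤ c - 1) :
    max (a - t) 0 - max (c - t) 0 ≤ -1 := by
  have h3 : max (a - t) 0 ≤ c - 1 - t := max_le (by linarith) (by linarith)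
  have h4 : max (c - t) 0 = c - t := max_eq_left (by linarith)
  linarith

lemma cross_le (a c t : ℝ) (h : a ≤ c) : max (a - t) 0 - max (c - t) 0 ≤ 0 := by
  have := max_le_max (sub_le_sub_right h t) (le_refl (0:ℝ))
  linarith

lemma cross_bound (a c t K : ℝ) (h : a - c ≤ K) (hK : 0 ≤ K) :
    max (a - t) 0 - max (c - t) 0 ≤ K := by
  have h3 : max (a - t) 0 ≤ max (c - t) 0 + K := by
    apply max_le
    · have : c - t ≤ max (c - t) 0 := le_max_left _ _
      linarith
    · have : (0:ℝ) ≤ max (c - t) 0 := le_max_right _ _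
      linarith
  linarith

lemma max_scale (a t lam : ℝ) (ha : 0 ≤ a) (hl : 1 ≤ lam) :
    max (a - lam * t) 0 ≤ lam * max (a - t) 0 := by
  have h0 : (0:ℝ) ≤ lam := by linarith
  have h1 : lam * (a - t) ≤ lam * max (a - t) 0 :=
    mul_le_mul_of_nonneg_left (le_max_left _ _) h0
  have h2 : a - lam * t ≤ lam * (a - t) := by nlinarith
  exact max_le (le_trans h2 h1) (by positivity)

lemma max_scale_eq (x t lam : ℝ) (hl : 0 ≤ lam) :
    max (lam * x - lam * t) 0 = lam * max (x - t) 0 := by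
  rw [← mul_sub]
  rcases le_total (x - t) 0 with h | h
  · rw [max_eq_right h, max_eq_right (by nlinarith), mul_zero]
  · rw [max_eq_left h, max_eq_left (by positivity)]

end maxlemmas

section dsr

variable {B : ℕ}

lemma sLtB (s : Fin B) : ((s:ℕ):ℝ) + 1 ≤ (B:ℝ) := by
  have h := s.isLt
  exact_mod_cast Nat.succ_le_of_lt h

lemma cost_of_le {s x : Fin B} (h : (x:ℕ) ≤ (s:ℕ)) :
    dsrCost B s x = (B:ℝ) + ((x:ℕ):ℝ) := if_pos h

lemma cost_of_gt {s x : Fin B} (h : (s:ℕ) < (x:ℕ)) :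
    dsrCost B s x = ((s:ℕ):ℝ) + 1 := if_neg (not_le.mpr h)

lemma cost_ge (s x : Fin B) : ((s:ℕ):ℝ) + 1 ≤ dsrCost B s x := by
  unfold dsrCost
  split
  · have h1 : ((s:ℕ):ℝ) + 1 ≤ (B:ℝ) := sLtB s
    have h2 : (0:ℝ) ≤ ((x:ℕ):ℝ) := by positivity
    linarith
  · exact le_refl _

lemma cost_nonneg (s x : Fin B) : 0 ≤ dsrCost B s x :=
  le_trans (by positivity) (cost_ge s x)

lemma cost_le (s x : Fin B) : dsrCost B s x ≤ 2 * (B:ℝ) := by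
  unfold dsrCost
  split
  · have h1 : ((x:ℕ):ℝ) + 1 ≤ (B:ℝ) := sLtB x
    linarith
  · have h1 : ((s:ℕ):ℝ) + 1 ≤ (B:ℝ) := sLtB s
    have h2 : (0:ℝ) ≤ (B:ℝ) := by positivity
    linarith

lemma ratio_eq (δ : ℝ) (p : Fin B → ℝ) (s : Fin B) :
    dsrRatio δ B p s = dcvar δ p (dsrCost B s) / (((s:ℕ):ℝ) + 1) := by
  rw [dsrRatio, min_eq_left (sLtB s)]

def fpred (x : Fin B) : Fin B := ⟨x.1 - 1, lt_of_le_of_lt (Nat.sub_le _ _) x.2⟩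

noncomputable def msrc (B : ℕ) (p : Fin B → ℝ) (s : Fin B) : Fin B :=
  if h : (Finset.univ.filter (fun x : Fin B => (x:ℕ) ≤ (s:ℕ) ∧ p x ≠ 0)).Nonempty
  then (Finset.univ.filter (fun x : Fin B => (x:ℕ) ≤ (s:ℕ) ∧ p x ≠ 0)).max' h
  else s

lemma msrc_spec (p : Fin B → ℝ) (s : Fin B)
    (h : (Finset.univ.filter (fun x : Fin B => (x:ℕ) ≤ (s:ℕ) ∧ p x ≠ 0)).Nonempty) :
    (msrc B p s : ℕ) ≤ (s:ℕ) ∧ p (msrc B p s) ≠ 0 ∧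
      ∀ x : Fin B, (x:ℕ) ≤ (s:ℕ) → p x ≠ 0 → (x:ℕ) ≤ ((msrc B p s : Fin B):ℕ) := by
  rw [msrc, dif_pos h]
  have hmem := Finset.max'_mem _ h
  rw [Finset.mem_filter] at hmem
  refine ⟨hmem.2.1, hmem.2.2, ?_⟩
  intro x hx hpx
  have hmem2 : x ∈ Finset.univ.filter (fun x : Fin B => (x:ℕ) ≤ (s:ℕ) ∧ p x ≠ 0) :=
    Finset.mem_filter.mpr ⟨Finset.mem_univ x, hx, hpx⟩
  have hle := Finset.le_max' _ x hmem2
  exact Fin.le_def.mp hle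

end dsr
end DSRaux
namespace DSRaux

lemma cost_le_top {B : ℕ} (s x : Fin B) (hB : 1 ≤ B) :
    dsrCost B s x ≤ (B:ℝ) + ((s:ℕ):ℝ) := by
  unfold dsrCost
  split
  · have h : ((x:ℕ):ℝ) ≤ ((s:ℕ):ℝ) := by exact_mod_cast ‹(x:ℕ) ≤ (s:ℕ)›
    linarith
  · have h : (1:ℝ) ≤ (B:ℝ) := by exact_mod_cast hB
    linarith

lemma sum_inds {n : ℕ} (a b : Fin n) (h : Fin n → ℝ) (c : ℝ) :
    ∑ i, (c * ((if i = a then (1:ℝ) else 0) - (if i = b then (1:ℝ) else 0))) * h i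
      = c * (h a - h b) := by
  have he : ∀ i ∈ Finset.univ,
      (c * ((if i = a then (1:ℝ) else 0) - (if i = b then (1:ℝ) else 0))) * h i
        = c * ((if i = a then h i else 0) - (if i = b then h i else 0)) := by
    intro i _
    split_ifs <;> ring
  rw [Finset.sum_congr rfl he, ← Finset.mul_sum]
  congr 1
  rw [Finset.sum_sub_distrib, Finset.sum_ite_eq' Finset.univ a h,
    Finset.sum_ite_eq' Finset.univ b h, if_pos (Finset.mem_univ a),
    if_pos (Finset.mem_univ b)]

end DSRaux


set_option maxHeartbeats 2000000 in
/-- Lemma 16: if the optimal `δ`-CVaR competitive ratio strictly improves on the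
deterministic optimum `2 - 1/B`, then under an optimal strategy the adversary is
indifferent to its chosen ski season duration. -/
theorem dsr_equality_principle (B : ℕ) (hB : 2 ≤ B) (δ : ℝ) (hδ : δ ∈ Ico (0:ℝ) 1)
    (hopt_lt : dsrOpt δ B < 2 - 1 / B)
    (p : Fin B → ℝ) (hpos : ∀ i, 0 ≤ p i) (hsum : ∑ i, p i = 1)
    (hopt : dsrCR δ B p = dsrOpt δ B) :
    ∀ i : Fin B, dsrRatio δ B p i = dsrOpt δ B := by
  classical
  obtain ⟨hδ0, hδ1⟩ := hδ
  set α := dsrOpt δ B with hαdef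
  set r : Fin B → ℝ := fun s => dsrRatio δ B p s with hrdef
  set C : Fin B → ℝ := fun s => dcvar δ p (dsrCost B s) with hCdef
  by_contra hcon
  push_neg at hcon
  obtain ⟨i₁, hi₁⟩ := hcon
  have h1δ : (0:ℝ) < 1 - δ := by linarith
  have hinv0 : (0:ℝ) ≤ (1 - δ)⁻¹ := by positivity
  have hBR : (2:ℝ) ≤ (B:ℝ) := by exact_mod_cast hB
  have hB0 : (0:ℝ) < (B:ℝ) := by linarith
  have hα_lt : α < 2 - 1/(B:ℝ) := hopt_lt
  have hrC : ∀ s, r s = C s / (((s:ℕ):ℝ)+1) := fun s => DSRaux.ratio_eq δ p s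
  have hsp : ∀ s : Fin B, (0:ℝ) < ((s:ℕ):ℝ) + 1 := fun s => by positivity
  have hbddA : BddAbove (Set.range (fun s => dsrRatio δ B p s)) :=
    (Set.finite_range _).bddAbove
  have hr_le : ∀ s, r s ≤ α := by
    intro s
    have h1 : dsrRatio δ B p s ≤ dsrCR δ B p := le_ciSup hbddA s
    rw [hopt] at h1
    exact h1
  have hE_le : ∀ s, (∑ i, p i * dsrCost B s i) ≤ C s :=
    fun s => DSRaux.E_le_dcvar hδ0 hδ1 hpos hsum
  have hC0 : ∀ s, 0 ≤ C s := by
    intro s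
    refine le_trans ?_ (hE_le s)
    exact Finset.sum_nonneg fun i _ => mul_nonneg (hpos i) (DSRaux.cost_nonneg s i)
  have hCA : ∀ s, r s = α → C s = α * (((s:ℕ):ℝ)+1) := by
    intro s h
    rw [hrC s] at h
    field_simp at h
    linarith [h]
  have hr_lt : ∀ s, r s ≠ α → r s < α := fun s h => (hr_le s).lt_of_ne h
  have hClt : ∀ s, r s ≠ α → C s < α * (((s:ℕ):ℝ)+1) := by
    intro s h
    have := hr_lt s h
    rw [hrC s] at this
    exact (div_lt_iff₀ (hsp s)).mp this
  -- every single-day probability is < 1 - δ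
  have hlight : ∀ m0 : Fin B, p m0 < 1 - δ := by
    intro m0
    by_contra hge
    push_neg at hge
    have h1 : (B:ℝ) + ((m0:ℕ):ℝ) ≤ C m0 := by
      have h2 := DSRaux.dcvar_ge_heavy (f := dsrCost B m0) hδ0 hδ1 hpos m0 hge
      rwa [DSRaux.cost_of_le (le_refl _)] at h2
    have hm1 : ((m0:ℕ):ℝ) + 1 ≤ (B:ℝ) := DSRaux.sLtB m0
    have h2 : 2 - 1/(B:ℝ) ≤ ((B:ℝ) + ((m0:ℕ):ℝ)) / (((m0:ℕ):ℝ)+1) := by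
      rw [le_div_iff₀ (hsp m0)]
      have hBinv : (1/(B:ℝ)) * (B:ℝ) = 1 := by field_simp
      have hprod : (0:ℝ) ≤ ((B:ℝ) - 1) * ((B:ℝ) - (((m0:ℕ):ℝ) + 1)) :=
        mul_nonneg (by linarith) (by linarith)
      have hBinv_pos : 0 < 1/(B:ℝ) := by positivity
      have hm0nn : (0:ℝ) ≤ ((m0:ℕ):ℝ) := by positivity
      nlinarith [hBinv, hprod, mul_le_mul_of_nonneg_left hm1 (le_of_lt hBinv_pos)]
    have h3 : r m0 ≤ α := hr_le m0
    rw [hrC m0] at h3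
    have h4 : ((B:ℝ) + ((m0:ℕ):ℝ)) / (((m0:ℕ):ℝ)+1) ≤ C m0 / (((m0:ℕ):ℝ)+1) :=
      (div_le_div_iff_of_pos_right (hsp m0)).mpr h1
    linarith
  have hsupp : (Finset.univ.filter (fun i : Fin B => p i ≠ 0)).Nonempty := by
    by_contra hne
    rw [Finset.not_nonempty_iff_eq_empty, Finset.filter_eq_empty_iff] at hne
    have h0 : ∑ i, p i = 0 := Finset.sum_eq_zero fun i hi => by
      have := hne hi; simpa using this
    rw [hsum] at h0
    norm_num at h0
  have hα1 : (1:ℝ) < α := by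
    set Mg := (Finset.univ.filter (fun i : Fin B => p i ≠ 0)).max' hsupp with hMgdef
    have hMg_mem : p Mg ≠ 0 := (Finset.mem_filter.mp (Finset.max'_mem _ hsupp)).2
    have hMg_max : ∀ x : Fin B, p x ≠ 0 → (x:ℕ) ≤ (Mg:ℕ) := by
      intro x hx
      exact Fin.le_def.mp (Finset.le_max' _ x
        (Finset.mem_filter.mpr ⟨Finset.mem_univ x, hx⟩))
    have hMg1 : 1 ≤ (Mg:ℕ) := by
      by_contra h0
      push_neg at h0
      have hMg0 : (Mg:ℕ) = 0 := by omega
      have hsum1 : p Mg = 1 := by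
        rw [← hsum]
        symm
        apply Finset.sum_eq_single
        · intro b _ hbne
          by_contra hb
          have h5 := hMg_max b hb
          exact hbne (Fin.ext (by omega))
        · intro h5; exact absurd (Finset.mem_univ Mg) h5
      have h6 := hlight Mg
      rw [hsum1] at h6
      linarith
    have hpMg : 0 < p Mg := lt_of_le_of_ne (hpos Mg) (Ne.symm hMg_mem)
    have hEB : (B:ℝ) + p Mg * ((Mg:ℕ):ℝ) ≤ ∑ i, p i * dsrCost B Mg i := by
      have hterm : ∀ i ∈ Finset.univ,
          p i * (B:ℝ) + (if i = Mg then p i * ((Mg:ℕ):ℝ) else 0) ≤ p i * dsrCost B Mg i := by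
        intro i _
        by_cases hiMg : i = Mg
        · subst hiMg
          rw [if_pos rfl, DSRaux.cost_of_le (le_refl _)]
          ring_nf
          exact le_refl _
        · rw [if_neg hiMg, add_zero]
          by_cases hpi : p i = 0
          · rw [hpi, zero_mul, zero_mul]
          · have hile : (i:ℕ) ≤ (Mg:ℕ) := hMg_max i hpi
            rw [DSRaux.cost_of_le hile]
            have h7 := hpos i
            have h8 : (0:ℝ) ≤ ((i:ℕ):ℝ) := by positivity
            nlinarith
      have h9 := Finset.sum_le_sum hterm
      rw [Finset.sum_add_distrib, ← Finset.sum_mul, hsum, one_mul,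
        Finset.sum_ite_eq' Finset.univ Mg (fun i => p i * ((Mg:ℕ):ℝ)),
        if_pos (Finset.mem_univ Mg)] at h9
      exact h9
    have hECMg := hE_le Mg
    have hrMg : ((B:ℝ) + p Mg * ((Mg:ℕ):ℝ)) / (((Mg:ℕ):ℝ)+1) ≤ r Mg := by
      rw [hrC Mg]
      exact (div_le_div_iff_of_pos_right (hsp Mg)).mpr (le_trans hEB hECMg)
    have hgt1 : (1:ℝ) < ((B:ℝ) + p Mg * ((Mg:ℕ):ℝ)) / (((Mg:ℕ):ℝ)+1) := by
      rw [lt_div_iff₀ (hsp Mg)]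
      have hmB : ((Mg:ℕ):ℝ) + 1 ≤ (B:ℝ) := DSRaux.sLtB Mg
      have hMg1R : (1:ℝ) ≤ ((Mg:ℕ):ℝ) := by exact_mod_cast hMg1
      nlinarith
    linarith [hr_le Mg]
  have hri₁ : r i₁ < α := hr_lt i₁ hi₁
  have hsuppA : ∀ s : Fin B, r s = α →
      (Finset.univ.filter (fun x : Fin B => (x:ℕ) ≤ (s:ℕ) ∧ p x ≠ 0)).Nonempty := by
    intro s hs
    by_contra hne
    rw [Finset.not_nonempty_iff_eq_empty, Finset.filter_eq_empty_iff] at hne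
    have hle : C s ≤ ((s:ℕ):ℝ) + 1 := by
      have hg := DSRaux.dcvar_le_gfun (f := dsrCost B s) hδ0 hδ1 hpos hsum (((s:ℕ):ℝ)+1)
      have hg0 : DSRaux.gfun δ p (dsrCost B s) (((s:ℕ):ℝ)+1) = ((s:ℕ):ℝ)+1 := by
        unfold DSRaux.gfun
        have hz : ∀ i ∈ Finset.univ, p i * max (dsrCost B s i - (((s:ℕ):ℝ)+1)) 0 = 0 := by
          intro i _
          by_cases hpi : p i = 0
          · rw [hpi, zero_mul]
          · have hgt : (s:ℕ) < (i:ℕ) := by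
              by_contra hcon2
              push_neg at hcon2
              exact (hne (Finset.mem_univ i)) ⟨hcon2, hpi⟩
            rw [DSRaux.cost_of_gt hgt]
            simp
        rw [Finset.sum_eq_zero hz, mul_zero, add_zero]
      rw [hg0] at hg
      exact hg
    have h10 : r s ≤ 1 := by
      rw [hrC s]
      exact (div_le_one (hsp s)).mpr hle
    rw [hs] at h10
    linarith
  set m : Fin B → Fin B := fun s => DSRaux.msrc B p s with hmdef
  have hm_spec : ∀ s, r s = α → ((m s : ℕ) ≤ (s:ℕ) ∧ p (m s) ≠ 0 ∧
      ∀ x : Fin B, (x:ℕ) ≤ (s:ℕ) → p x ≠ 0 → (x:ℕ) ≤ (m s : ℕ)) :=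
    fun s h => DSRaux.msrc_spec p s (hsuppA s h)
  have hms_gt : ∀ s : Fin B, r s = α → (i₁:ℕ) < (s:ℕ) → (i₁:ℕ) < (m s : ℕ) := by
    intro s hsA hi₁s
    by_contra hle
    push_neg at hle
    have hspec := hm_spec s hsA
    have hzero : ∀ x : Fin B, (i₁:ℕ) < (x:ℕ) → (x:ℕ) ≤ (s:ℕ) → p x = 0 := by
      intro x h1 h2
      by_contra hx
      have h3 := hspec.2.2 x h2 hx
      omega
    set lam : ℝ := (((s:ℕ):ℝ)+1)/(((i₁:ℕ):ℝ)+1) with hlam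
    have hl1 : 1 ≤ lam := by
      rw [hlam, le_div_iff₀ (hsp i₁)]
      have h4 : ((i₁:ℕ):ℝ) ≤ ((s:ℕ):ℝ) := by exact_mod_cast le_of_lt hi₁s
      linarith
    have hlam_pos : 0 < lam := lt_of_lt_of_le one_pos hl1
    have hCs_le : C s ≤ lam * C i₁ := by
      apply le_of_forall_pos_le_add
      intro ε' hε'
      obtain ⟨t, ht⟩ := DSRaux.exists_gfun_lt (q := p) (f := dsrCost B i₁) hδ1
        (show 0 < ε'/lam by positivity)
      have step1 : C s ≤ DSRaux.gfun δ p (dsrCost B s) (lam * t) :=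
        DSRaux.dcvar_le_gfun hδ0 hδ1 hpos hsum _
      have step2 : DSRaux.gfun δ p (dsrCost B s) (lam * t)
          ≤ lam * DSRaux.gfun δ p (dsrCost B i₁) t := by
        unfold DSRaux.gfun
        have hterm : ∀ i ∈ Finset.univ, p i * max (dsrCost B s i - lam*t) 0
            ≤ lam * (p i * max (dsrCost B i₁ i - t) 0) := by
          intro i _
          rcases le_or_gt (i:ℕ) (i₁:ℕ) with hii | hii
          · have hiu : (i:ℕ) ≤ (s:ℕ) := le_trans hii (le_of_lt hi₁s)
            rw [DSRaux.cost_of_le hii, DSRaux.cost_of_le hiu]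
            have h5 := DSRaux.max_scale ((B:ℝ)+((i:ℕ):ℝ)) t lam (by positivity) hl1
            calc p i * max ((B:ℝ)+((i:ℕ):ℝ) - lam*t) 0
                ≤ p i * (lam * max ((B:ℝ)+((i:ℕ):ℝ) - t) 0) :=
                  mul_le_mul_of_nonneg_left h5 (hpos i)
              _ = lam * (p i * max ((B:ℝ)+((i:ℕ):ℝ) - t) 0) := by ring
          · rcases le_or_gt (i:ℕ) (s:ℕ) with his | his
            · rw [hzero i hii his, zero_mul, zero_mul, mul_zero]
            · rw [DSRaux.cost_of_gt his, DSRaux.cost_of_gt hii]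
              have heq : ((s:ℕ):ℝ) + 1 = lam * (((i₁:ℕ):ℝ)+1) := by
                rw [hlam]; field_simp
              rw [heq, DSRaux.max_scale_eq ((((i₁:ℕ):ℝ))+1) t lam (le_of_lt hlam_pos)]
              calc p i * (lam * max ((((i₁:ℕ):ℝ))+1 - t) 0)
                  = lam * (p i * max ((((i₁:ℕ):ℝ))+1 - t) 0) := by ring
                _ ≤ lam * (p i * max ((((i₁:ℕ):ℝ))+1 - t) 0) := le_refl _
        have hsum_le := Finset.sum_le_sum hterm
        have hmulsum : ∑ i, lam * (p i * max (dsrCost B i₁ i - t) 0)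
            = lam * ∑ i, p i * max (dsrCost B i₁ i - t) 0 := by
          rw [Finset.mul_sum]
        rw [hmulsum] at hsum_le
        have hc2 : (1-δ)⁻¹ * (∑ i, p i * max (dsrCost B s i - lam*t) 0)
            ≤ (1-δ)⁻¹ * (lam * ∑ i, p i * max (dsrCost B i₁ i - t) 0) :=
          mul_le_mul_of_nonneg_left hsum_le hinv0
        calc lam*t + (1-δ)⁻¹ * ∑ i, p i * max (dsrCost B s i - lam*t) 0
            ≤ lam*t + (1-δ)⁻¹ * (lam * ∑ i, p i * max (dsrCost B i₁ i - t) 0) := by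
              linarith
          _ = lam * (t + (1-δ)⁻¹ * ∑ i, p i * max (dsrCost B i₁ i - t) 0) := by ring
      have step3 : lam * DSRaux.gfun δ p (dsrCost B i₁) t ≤ lam * (C i₁ + ε'/lam) :=
        mul_le_mul_of_nonneg_left (le_of_lt ht) (le_of_lt hlam_pos)
      have step4 : lam * (C i₁ + ε'/lam) = lam * C i₁ + ε' := by
        field_simp
      linarith
    have hrs : r s ≤ r i₁ := by
      rw [hrC s, hrC i₁]
      have h6 : C s / (((s:ℕ):ℝ)+1) ≤ (lam * C i₁) / (((s:ℕ):ℝ)+1) :=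
        (div_le_div_iff_of_pos_right (hsp s)).mpr hCs_le
      have h7 : (lam * C i₁) / (((s:ℕ):ℝ)+1) = C i₁ / (((i₁:ℕ):ℝ)+1) := by
        rw [hlam]
        field_simp
      linarith
    rw [hsA] at hrs
    linarith
  -- constants
  set pmin := (Finset.univ.filter (fun i : Fin B => p i ≠ 0)).inf' hsupp p with hpmindef
  have hpmin_pos : 0 < pmin := by
    obtain ⟨i, hi, hieq⟩ := Finset.exists_mem_eq_inf' hsupp p
    rw [hpmindef, hieq]
    rcases Finset.mem_filter.mp hi with ⟨_, hne⟩
    exact lt_of_le_of_ne (hpos i) (Ne.symm hne)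
  have hpmin_le : ∀ i, p i ≠ 0 → pmin ≤ p i := fun i hi =>
    Finset.inf'_le p (Finset.mem_filter.mpr ⟨Finset.mem_univ i, hi⟩)
  set N := Finset.univ.filter (fun s : Fin B => r s ≠ α) with hNdef
  have hi₁N : i₁ ∈ N := Finset.mem_filter.mpr ⟨Finset.mem_univ i₁, hi₁⟩
  have hNne : N.Nonempty := ⟨i₁, hi₁N⟩
  set gap : Fin B → ℝ := fun s => α * (((s:ℕ):ℝ)+1) - C s with hgapdef
  set gmin := N.inf' hNne gap with hgmindef
  have hgmin_pos : 0 < gmin := by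
    obtain ⟨s, hs, hseq⟩ := Finset.exists_mem_eq_inf' hNne gap
    rw [hgmindef, hseq, hgapdef]
    have := hClt s (Finset.mem_filter.mp hs).2
    simp only [sub_pos]
    linarith
  have hgmin_le : ∀ s ∈ N, gmin ≤ gap s := fun s hs => Finset.inf'_le gap hs
  set β : ℝ := 2*(B:ℝ)^2 with hβdef
  have hβpos : 0 < β := by rw [hβdef]; positivity
  have hβ1 : (1:ℝ) ≤ β := by rw [hβdef]; nlinarith
  set W : ℝ := (B:ℝ) * β^(B-1) with hWdef
  have hW_pos : 0 < W := by rw [hWdef]; exact mul_pos hB0 (pow_pos hβpos _)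
  set ρ : ℝ := 1/β^2 with hρdef
  have hρ_pos : 0 < ρ := by rw [hρdef]; positivity
  set Γ : ℝ := 2*(B:ℝ)*W with hΓdef
  have hΓ_pos : 0 < Γ := by rw [hΓdef]; exact mul_pos (by linarith) hW_pos
  have hden_pos : 0 < ρ/2 + Γ := by linarith
  set ε : ℝ := min (pmin / W) ((1-δ) * gmin / (ρ/2 + Γ)) with hεdef
  have hε_pos : 0 < ε := lt_min (div_pos hpmin_pos hW_pos)
    (div_pos (mul_pos h1δ hgmin_pos) hden_pos)
  have hεW : ε * W ≤ pmin := by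
    have h := min_le_left (pmin / W) ((1-δ) * gmin / (ρ/2 + Γ))
    rw [← hεdef] at h
    rw [← le_div_iff₀ hW_pos]
    exact h
  have hεG : (1-δ)⁻¹ * (ε * (ρ/2 + Γ)) ≤ gmin := by
    have h := min_le_right (pmin / W) ((1-δ) * gmin / (ρ/2 + Γ))
    rw [← hεdef, le_div_iff₀ hden_pos] at h
    calc (1-δ)⁻¹ * (ε * (ρ/2 + Γ)) ≤ (1-δ)⁻¹ * ((1-δ) * gmin) :=
          mul_le_mul_of_nonneg_left h hinv0
      _ = gmin := by field_simp
  set η : ℝ := (1-δ)⁻¹ * ε * ρ / 2 with hηdef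
  have hη_pos : 0 < η := by
    rw [hηdef]
    have : 0 < (1-δ)⁻¹ := by positivity
    positivity
  -- weights and destinations
  set w : Fin B → ℝ := fun s' =>
    if r s' = α then (if (i₁:ℕ) < (s':ℕ) then β^(B-1-(s':ℕ)) else ρ) else 0 with hwdef
  set d : Fin B → Fin B := fun s' =>
    if (s':ℕ) < (i₁:ℕ) then i₁ else DSRaux.fpred (m s') with hddef
  have hβpow1 : (1:ℝ) ≤ β^(B-1) := by
    have h := pow_le_pow_right₀ hβ1 (Nat.zero_le (B-1))
    simpa using h
  have hw_nonneg : ∀ s', 0 ≤ w s' := by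
    intro s'
    rw [hwdef]
    dsimp only
    split_ifs with h1 h2
    · exact (pow_pos hβpos _).le
    · exact hρ_pos.le
    · exact le_refl 0
  have hw_le : ∀ s', w s' ≤ β^(B-1) := by
    intro s'
    rw [hwdef]
    dsimp only
    split_ifs with h1 h2
    · exact pow_le_pow_right₀ hβ1 (Nat.sub_le _ _)
    · have h3 : ρ ≤ 1 := by
        rw [hρdef, div_le_one (by positivity)]
        nlinarith [hβ1]
      linarith
    · exact (pow_pos hβpos _).le
  have hsumw : ∑ s', w s' ≤ W := by
    calc ∑ s', w s' ≤ ∑ _s' : Fin B, β^(B-1) := Finset.sum_le_sum fun s' _ => hw_le s'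
      _ = (B:ℝ) * β^(B-1) := by
          rw [Finset.sum_const, Finset.card_univ, Fintype.card_fin, nsmul_eq_mul]
      _ = W := hWdef.symm
  -- choice of near-optimal thresholds
  have hts0 : ∀ s : Fin B, ∃ t : ℝ, DSRaux.gfun δ p (dsrCost B s) t < C s + η ∧
      (r s = α → t ≤ (B:ℝ) + ((m s : ℕ):ℝ) - 1) := by
    intro s
    obtain ⟨t0, ht0⟩ := DSRaux.exists_gfun_lt (q := p) (f := dsrCost B s) hδ1 hη_pos
    by_cases hsA : r s = α
    · refine ⟨min t0 ((B:ℝ) + ((m s:ℕ):ℝ) - 1), ?_, fun _ => min_le_right _ _⟩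
      rcases le_total t0 ((B:ℝ) + ((m s:ℕ):ℝ) - 1) with hc | hc
      · rw [min_eq_left hc]; exact ht0
      · rw [min_eq_right hc]
        refine lt_of_le_of_lt (DSRaux.gfun_mono_above hδ0 hδ1 hpos hc ?_) ht0
        have hsub : ∀ i ∈ Finset.univ.filter
            (fun i => (B:ℝ) + ((m s:ℕ):ℝ) - 1 < dsrCost B s i), p i ≠ 0 → i = m s := by
          intro i hi hpi
          rw [Finset.mem_filter] at hi
          rcases le_or_gt (i:ℕ) (s:ℕ) with his | his
          · rw [DSRaux.cost_of_le his] at hi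
            have h1 : ((m s:ℕ):ℝ) < ((i:ℕ):ℝ) + 1 := by linarith [hi.2]
            have h2 : (m s:ℕ) < (i:ℕ)+1 := by exact_mod_cast h1
            have h3 := (hm_spec s hsA).2.2 i his hpi
            exact Fin.ext (by omega)
          · exfalso
            rw [DSRaux.cost_of_gt his] at hi
            have hsB := DSRaux.sLtB s
            have hm0 : (0:ℝ) ≤ ((m s:ℕ):ℝ) := by positivity
            have h4 : (B:ℕ) < (s:ℕ) + 2 := by
              have h5 : (B:ℝ) < ((s:ℕ):ℝ) + 2 := by linarith [hi.2]
              exact_mod_cast h5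
            have h6 := i.isLt
            omega
        calc ∑ i ∈ Finset.univ.filter
              (fun i => (B:ℝ) + ((m s:ℕ):ℝ) - 1 < dsrCost B s i), p i
            = ∑ i ∈ (Finset.univ.filter
              (fun i => (B:ℝ) + ((m s:ℕ):ℝ) - 1 < dsrCost B s i)).filter
                (fun i => p i ≠ 0), p i := (Finset.sum_filter_ne_zero _).symm
          _ ≤ ∑ i ∈ {m s}, p i := by
              apply Finset.sum_le_sum_of_subset_of_nonneg
              · intro i hi
                rw [Finset.mem_filter] at hi
                rw [Finset.mem_singleton]
                exact hsub i hi.1 hi.2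
              · intro i _ _
                exact hpos i
          _ = p (m s) := Finset.sum_singleton _ _
          _ ≤ 1 - δ := le_of_lt (hlight (m s))
    · exact ⟨t0, ht0, fun h => absurd h hsA⟩
  choose ts hts1 hts2 using hts0
  -- the perturbed strategy
  set p' : Fin B → ℝ := fun i => p i + ε * ∑ s', w s' *
    ((if i = d s' then (1:ℝ) else 0) - (if i = m s' then (1:ℝ) else 0)) with hp'def
  have hp'sum : ∑ i, p' i = 1 := by
    have hSi : ∑ i, (∑ s', w s' * ((if i = d s' then (1:ℝ) else 0)
        - (if i = m s' then (1:ℝ) else 0))) = 0 := by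
      rw [Finset.sum_comm]
      apply Finset.sum_eq_zero
      intro s' _
      rw [← Finset.mul_sum, Finset.sum_sub_distrib,
        Finset.sum_ite_eq' Finset.univ (d s') (fun _ => (1:ℝ)),
        Finset.sum_ite_eq' Finset.univ (m s') (fun _ => (1:ℝ)),
        if_pos (Finset.mem_univ _), if_pos (Finset.mem_univ _)]
      simp
    rw [hp'def]
    rw [Finset.sum_add_distrib, hsum, ← Finset.mul_sum, hSi, mul_zero, add_zero]
  have hp'pos : ∀ i, 0 ≤ p' i := by
    intro i
    have hp'i : p' i = p i + ε * ∑ s', w s' * ((if i = d s' then (1:ℝ) else 0)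
        - (if i = m s' then (1:ℝ) else 0)) := by rw [hp'def]
    by_cases hcase : ∃ s' : Fin B, w s' ≠ 0 ∧ m s' = i
    · obtain ⟨s0, hw0, hm0⟩ := hcase
      have hs0A : r s0 = α := by
        by_contra hA
        apply hw0
        rw [hwdef]
        dsimp only
        rw [if_neg hA]
      have hpi : p i ≠ 0 := by
        rw [← hm0]
        exact (hm_spec s0 hs0A).2.1
      have h1 : pmin ≤ p i := hpmin_le i hpi
      have h2 : ∀ s' ∈ Finset.univ, -(w s') ≤ w s' * ((if i = d s' then (1:ℝ) else 0)
          - (if i = m s' then (1:ℝ) else 0)) := by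
        intro s' _
        have hw := hw_nonneg s'
        have hd0 : (0:ℝ) ≤ (if i = d s' then (1:ℝ) else 0) := by
          split <;> norm_num
        have hm1 : (if i = m s' then (1:ℝ) else 0) ≤ 1 := by
          split <;> norm_num
        nlinarith
      have h3 : -(∑ s', w s') ≤ ∑ s', w s' * ((if i = d s' then (1:ℝ) else 0)
          - (if i = m s' then (1:ℝ) else 0)) := by
        rw [← Finset.sum_neg_distrib]
        exact Finset.sum_le_sum h2
      have h4 : -(ε * W) ≤ ε * ∑ s', w s' * ((if i = d s' then (1:ℝ) else 0)
          - (if i = m s' then (1:ℝ) else 0)) := by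
        have h5 : ε * (-(∑ s', w s')) ≤ ε * ∑ s', w s' * ((if i = d s' then (1:ℝ) else 0)
            - (if i = m s' then (1:ℝ) else 0)) := mul_le_mul_of_nonneg_left h3 hε_pos.le
        have h6 : ε * (∑ s', w s') ≤ ε * W := mul_le_mul_of_nonneg_left hsumw hε_pos.le
        nlinarith
      rw [hp'i]
      linarith [hεW]
    · push_neg at hcase
      have h2 : ∀ s' ∈ Finset.univ, (0:ℝ) ≤ w s' * ((if i = d s' then (1:ℝ) else 0)
          - (if i = m s' then (1:ℝ) else 0)) := by
        intro s' _
        by_cases hw' : w s' = 0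
        · rw [hw', zero_mul]
        · have hne := hcase s' hw'
          have hm0 : (if i = m s' then (1:ℝ) else 0) = 0 := by
            rw [if_neg (fun h => hne h.symm)]
          rw [hm0, sub_zero]
          have hd0 : (0:ℝ) ≤ (if i = d s' then (1:ℝ) else 0) := by
            split <;> norm_num
          exact mul_nonneg (hw_nonneg s') hd0
      have h3 : (0:ℝ) ≤ ∑ s', w s' * ((if i = d s' then (1:ℝ) else 0)
          - (if i = m s' then (1:ℝ) else 0)) := Finset.sum_nonneg h2
      rw [hp'i]
      have := hpos i
      nlinarith [hε_pos]
  set T : Fin B → ℝ := fun s => ∑ s', w s' *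
    (max (dsrCost B s (d s') - ts s) 0 - max (dsrCost B s (m s') - ts s) 0) with hTdef
  have hmaster : ∀ s : Fin B, dcvar δ p' (dsrCost B s) < C s + η + (1-δ)⁻¹ * (ε * T s) := by
    intro s
    have h1 : dcvar δ p' (dsrCost B s) ≤ DSRaux.gfun δ p' (dsrCost B s) (ts s) :=
      DSRaux.dcvar_le_gfun hδ0 hδ1 hp'pos hp'sum _
    have h2 := DSRaux.gfun_perturb δ p p' (dsrCost B s) (ts s)
    have h3 : ∑ i, (p' i - p i) * max (dsrCost B s i - ts s) 0 = ε * T s := by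
      have hpp : ∀ i ∈ Finset.univ, (p' i - p i) * max (dsrCost B s i - ts s) 0
          = ∑ s', ((ε * w s') * ((if i = d s' then (1:ℝ) else 0)
            - (if i = m s' then (1:ℝ) else 0))) * max (dsrCost B s i - ts s) 0 := by
        intro i _
        have hdiff : p' i - p i = ε * ∑ s', w s' * ((if i = d s' then (1:ℝ) else 0)
            - (if i = m s' then (1:ℝ) else 0)) := by rw [hp'def]; ring
        rw [hdiff, Finset.mul_sum, Finset.sum_mul]
        apply Finset.sum_congr rfl
        intro s' _
        ring
      rw [Finset.sum_congr rfl hpp, Finset.sum_comm]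
      have hinner : ∀ s' ∈ Finset.univ,
          (∑ i, ((ε * w s') * ((if i = d s' then (1:ℝ) else 0)
            - (if i = m s' then (1:ℝ) else 0))) * max (dsrCost B s i - ts s) 0)
          = (ε * w s') * (max (dsrCost B s (d s') - ts s) 0
            - max (dsrCost B s (m s') - ts s) 0) := by
        intro s' _
        exact DSRaux.sum_inds (d s') (m s') (fun i => max (dsrCost B s i - ts s) 0) (ε * w s')
      rw [Finset.sum_congr rfl hinner, hTdef]
      dsimp only
      rw [Finset.mul_sum]
      apply Finset.sum_congr rfl
      intro s' _
      ring
    have h4 := hts1 s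
    rw [h3] at h2
    rw [h2] at h1
    linarith
  have hfpredval : ∀ x : Fin B, ((DSRaux.fpred x : Fin B) : ℕ) = (x:ℕ) - 1 :=
    fun x => rfl
  have hρeq : ρ * (4*(B:ℝ)^4) = 1 := by
    rw [hρdef, hβdef]; field_simp; ring
  have hB2 : (4:ℝ) ≤ (B:ℝ)^2 := by nlinarith [hBR]
  have hB4 : (16:ℝ) ≤ (B:ℝ)^4 := by nlinarith [hB2]
  have hρle : ρ ≤ 1/64 := by nlinarith [hρeq, hρ_pos.le, hB4]
  have hB2ρ : (B:ℝ)^2 * ρ ≤ 1/16 := by nlinarith [hρeq, hB2, hρ_pos.le, sq_nonneg (B:ℝ)]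
  have hTA : ∀ s, r s = α → T s ≤ -ρ := by
    intro s hsA
    set φ : Fin B → ℝ := fun s' => max (dsrCost B s (d s') - ts s) 0
      - max (dsrCost B s (m s') - ts s) 0 with hφdef
    have hTs : T s = ∑ s', w s' * φ s' := by
      rw [hTdef]
    have hspec := hm_spec s hsA
    have hcost_src : dsrCost B s (m s) = (B:ℝ) + ((m s:ℕ):ℝ) := DSRaux.cost_of_le hspec.1
    have hts_le : ts s ≤ (B:ℝ) + ((m s:ℕ):ℝ) - 1 := hts2 s hsA
    have hsi₁ : (s:ℕ) ≠ (i₁:ℕ) := by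
      intro h
      apply hi₁
      rw [show i₁ = s from Fin.ext h.symm]
      exact hsA
    have hT : T s = (∑ s' ∈ Finset.univ.erase s, w s' * φ s') + w s * φ s := by
      rw [hTs, ← Finset.sum_erase_add Finset.univ _ (Finset.mem_univ s)]
    rcases lt_or_gt_of_ne hsi₁ with hlow | hhigh
    · -- s below i₁
      have hws : w s = ρ := by
        rw [hwdef]; dsimp only; rw [if_pos hsA, if_neg (by omega)]
      have hds : d s = i₁ := by
        rw [hddef]; dsimp only; rw [if_pos hlow]
      have hownΔ : φ s ≤ -1 := by
        rw [hφdef]; dsimp only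
        apply DSRaux.own_term
        · rw [hds, DSRaux.cost_of_gt hlow, hcost_src]
          have h1 : ((s:ℕ):ℝ) + 2 ≤ (B:ℝ) := by
            have h2 : (s:ℕ) + 2 ≤ B := by have := i₁.isLt; omega
            exact_mod_cast h2
          have hm0 : (0:ℝ) ≤ ((m s:ℕ):ℝ) := by positivity
          linarith
        · rw [hcost_src]; exact hts_le
      have hown : w s * φ s ≤ -ρ := by
        rw [hws]
        have := mul_le_mul_of_nonneg_left hownΔ hρ_pos.le
        linarith
      have hcross : ∀ s' ∈ Finset.univ.erase s, w s' * φ s' ≤ 0 := by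
        intro s' _
        by_cases hw' : w s' = 0
        · rw [hw', zero_mul]
        · have hs'A : r s' = α := by
            by_contra h
            exact hw' (by rw [hwdef]; dsimp only; rw [if_neg h])
          have hd_gt : (s:ℕ) < ((d s'):ℕ) := by
            rw [hddef]; dsimp only
            by_cases hc : (s':ℕ) < (i₁:ℕ)
            · rw [if_pos hc]; exact hlow
            · rw [if_neg hc]
              push_neg at hc
              have hs'ne : (s':ℕ) ≠ (i₁:ℕ) := by
                intro h
                apply hi₁
                rw [show i₁ = s' from Fin.ext h.symm]
                exact hs'A
              have hgt : (i₁:ℕ) < (s':ℕ) := lt_of_le_of_ne hc (Ne.symm hs'ne)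
              have hmgt := hms_gt s' hs'A hgt
              rw [hfpredval]
              omega
          have hΔ : φ s' ≤ 0 := by
            rw [hφdef]; dsimp only
            apply DSRaux.cross_le
            rw [DSRaux.cost_of_gt hd_gt]
            exact DSRaux.cost_ge s (m s')
          have h3 := mul_le_mul_of_nonneg_left hΔ (hw_nonneg s')
          simpa using h3
      have hrest : ∑ s' ∈ Finset.univ.erase s, w s' * φ s' ≤ 0 :=
        Finset.sum_nonpos hcross
      linarith only [hT, hown, hrest]
    · -- s above i₁
      have hws : w s = β^(B-1-(s:ℕ)) := by
        rw [hwdef]; dsimp only; rw [if_pos hsA, if_pos hhigh]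
      have hmgt := hms_gt s hsA hhigh
      have hm1 : 1 ≤ (m s:ℕ) := by omega
      have hds : d s = DSRaux.fpred (m s) := by
        rw [hddef]; dsimp only; rw [if_neg (by omega)]
      have hdval : ((d s):ℕ) = (m s:ℕ) - 1 := by rw [hds, hfpredval]
      have hcastm : (((m s:ℕ) - 1 : ℕ):ℝ) = ((m s:ℕ):ℝ) - 1 := by
        have h := Nat.cast_sub hm1 (R := ℝ)
        simpa using h
      have hownΔ : φ s ≤ -1 := by
        rw [hφdef]; dsimp only
        apply DSRaux.own_term
        · rw [DSRaux.cost_of_le (show ((d s):ℕ) ≤ (s:ℕ) by omega), hcost_src, hdval,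
            hcastm]
          linarith
        · rw [hcost_src]; exact hts_le
      have hown : w s * φ s ≤ β^(B-1-(s:ℕ)) * (-1) := by
        rw [hws]
        exact mul_le_mul_of_nonneg_left hownΔ (pow_pos hβpos _).le
      have hite_nonneg : ∀ s' : Fin B,
          (0:ℝ) ≤ (if (s:ℕ) < (s':ℕ) then β^(B-1-(s:ℕ)-1) * (B:ℝ) else 0) := by
        intro s'
        split
        · exact mul_nonneg (pow_pos hβpos _).le hB0.le
        · exact le_refl 0
      have hρB_nonneg : (0:ℝ) ≤ ρ * (B:ℝ) := mul_nonneg hρ_pos.le hB0.le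
      have hcross : ∀ s' ∈ Finset.univ.erase s, w s' * φ s'
          ≤ ρ * (B:ℝ) + (if (s:ℕ) < (s':ℕ) then β^(B-1-(s:ℕ)-1) * (B:ℝ) else 0) := by
        intro s' hs'
        have hs'ne : s' ≠ s := (Finset.mem_erase.mp hs').1
        by_cases hw' : w s' = 0
        · rw [hw', zero_mul]
          linarith [hite_nonneg s']
        · have hs'A : r s' = α := by
            by_contra h
            exact hw' (by rw [hwdef]; dsimp only; rw [if_neg h])
          have hΔB : φ s' ≤ (B:ℝ) := by
            rw [hφdef]; dsimp only
            apply DSRaux.cross_bound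
            · have h1 := DSRaux.cost_le_top s (d s') (by omega)
              have h2 := DSRaux.cost_ge s (m s')
              linarith
            · linarith
          rcases lt_trichotomy (s':ℕ) (i₁:ℕ) with hc | hc | hc
          · have hws' : w s' = ρ := by
              rw [hwdef]; dsimp only; rw [if_pos hs'A, if_neg (by omega)]
            have h1 : w s' * φ s' ≤ ρ * (B:ℝ) := by
              rw [hws']
              exact mul_le_mul_of_nonneg_left hΔB hρ_pos.le
            linarith [hite_nonneg s']
          · exfalso
            apply hi₁
            rw [show i₁ = s' from Fin.ext hc.symm]
            exact hs'A
          · have hws' : w s' = β^(B-1-(s':ℕ)) := by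
              rw [hwdef]; dsimp only; rw [if_pos hs'A, if_pos hc]
            rcases lt_or_gt_of_ne (show (s':ℕ) ≠ (s:ℕ) from fun h => hs'ne (Fin.ext h))
              with hss | hss
            · -- s' < s : nonpositive contribution
              have hmgt' := hms_gt s' hs'A hc
              have hm1' : 1 ≤ (m s':ℕ) := by omega
              have hm'le : (m s':ℕ) ≤ (s':ℕ) := (hm_spec s' hs'A).1
              have hd'val : ((d s'):ℕ) = (m s':ℕ) - 1 := by
                rw [hddef]; dsimp only; rw [if_neg (by omega), hfpredval]
              have hΔ0 : φ s' ≤ 0 := by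
                rw [hφdef]; dsimp only
                apply DSRaux.cross_le
                rw [DSRaux.cost_of_le (show ((d s'):ℕ) ≤ (s:ℕ) by omega),
                  DSRaux.cost_of_le (show ((m s'):ℕ) ≤ (s:ℕ) by omega)]
                have h1 : (((m s':ℕ)-1:ℕ):ℝ) ≤ ((m s':ℕ):ℝ) := by
                  exact_mod_cast Nat.sub_le _ _
                rw [hd'val]
                linarith
              have h2 : w s' * φ s' ≤ 0 := by
                have h3 := mul_le_mul_of_nonneg_left hΔ0 (hw_nonneg s')
                simpa using h3
              linarith only [h2, hite_nonneg s', hρB_nonneg]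
            · -- s < s'
              have hwle : w s' ≤ β^(B-1-(s:ℕ)-1) := by
                rw [hws']
                apply pow_le_pow_right₀ hβ1
                omega
              have h1 : w s' * φ s' ≤ w s' * (B:ℝ) :=
                mul_le_mul_of_nonneg_left hΔB (hw_nonneg s')
              have h2 : w s' * (B:ℝ) ≤ β^(B-1-(s:ℕ)-1) * (B:ℝ) :=
                mul_le_mul_of_nonneg_right hwle hB0.le
              rw [if_pos hss]
              linarith
      have hrest : ∑ s' ∈ Finset.univ.erase s, w s' * φ s'
          ≤ ∑ s' ∈ Finset.univ.erase s, (ρ * (B:ℝ)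
            + (if (s:ℕ) < (s':ℕ) then β^(B-1-(s:ℕ)-1) * (B:ℝ) else 0)) :=
        Finset.sum_le_sum hcross
      have hsplit2 : ∑ s' ∈ Finset.univ.erase s, (ρ * (B:ℝ)
            + (if (s:ℕ) < (s':ℕ) then β^(B-1-(s:ℕ)-1) * (B:ℝ) else 0))
          = (∑ _s' ∈ Finset.univ.erase s, ρ * (B:ℝ))
            + ∑ s' ∈ Finset.univ.erase s,
              (if (s:ℕ) < (s':ℕ) then β^(B-1-(s:ℕ)-1) * (B:ℝ) else 0) :=
        Finset.sum_add_distrib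
      have hconst : (∑ _s' ∈ Finset.univ.erase s, ρ * (B:ℝ)) ≤ (B:ℝ) * (ρ * (B:ℝ)) := by
        rw [Finset.sum_const, nsmul_eq_mul]
        have hcard : ((Finset.univ.erase s).card : ℝ) ≤ (B:ℝ) := by
          have h1 : (Finset.univ.erase s).card ≤ B := by
            have h2 : (Finset.univ.erase s).card ≤ Finset.univ.card :=
              Finset.card_le_card (Finset.erase_subset _ _)
            rw [Finset.card_univ, Fintype.card_fin] at h2
            exact h2
          exact_mod_cast h1
        exact mul_le_mul_of_nonneg_right hcard hρB_nonneg
      have hite_sum : ∑ s' ∈ Finset.univ.erase s,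
            (if (s:ℕ) < (s':ℕ) then β^(B-1-(s:ℕ)-1) * (B:ℝ) else 0)
          ≤ ∑ s' : Fin B, (if (s:ℕ) < (s':ℕ) then β^(B-1-(s:ℕ)-1) * (B:ℝ) else 0) :=
        Finset.sum_le_sum_of_subset_of_nonneg (Finset.subset_univ _)
          (fun s' _ _ => hite_nonneg s')
      by_cases hsB : (s:ℕ) = B - 1
      · -- no seasons above s
        have hempty : ∑ s' : Fin B, (if (s:ℕ) < (s':ℕ) then β^(B-1-(s:ℕ)-1) * (B:ℝ) else 0)
            = 0 := by
          apply Finset.sum_eq_zero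
          intro s' _
          rw [if_neg]
          have := s'.isLt
          omega
        have hk0 : B-1-(s:ℕ) = 0 := by omega
        rw [hk0, pow_zero] at hown
        -- T ≤ B*(ρB) + 0 - 1 ≤ -ρ
        have hfin : (B:ℝ)*(ρ*(B:ℝ)) + 1 * (-1) + ρ ≤ 0 := by
          have heq : (B:ℝ)*(ρ*(B:ℝ)) = (B:ℝ)^2 * ρ := by ring
          linarith only [heq, hB2ρ, hρle]
        linarith only [hT, hown, hrest, hsplit2, hconst, hite_sum, hempty, hfin]
      · -- s ≤ B-2
        have hkpos : 1 ≤ B-1-(s:ℕ) := by have := s.isLt; omega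
        have hksucc : B-1-(s:ℕ) = (B-1-(s:ℕ)-1) + 1 := by omega
        have hpow_split : β^(B-1-(s:ℕ)) = β^(B-1-(s:ℕ)-1) * β := by
          rw [← pow_succ]
          congr 1
        have hpow1 : (1:ℝ) ≤ β^(B-1-(s:ℕ)-1) := by
          have h := pow_le_pow_right₀ hβ1 (Nat.zero_le (B-1-(s:ℕ)-1))
          simpa using h
        have hite_tot : ∑ s' : Fin B, (if (s:ℕ) < (s':ℕ) then β^(B-1-(s:ℕ)-1) * (B:ℝ) else 0)
            ≤ (B:ℝ) * (β^(B-1-(s:ℕ)-1) * (B:ℝ)) := by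
          have hterm2 : ∀ s' ∈ (Finset.univ : Finset (Fin B)),
              (if (s:ℕ) < (s':ℕ) then β^(B-1-(s:ℕ)-1) * (B:ℝ) else 0)
                ≤ β^(B-1-(s:ℕ)-1) * (B:ℝ) := by
            intro s' _
            split
            · exact le_refl _
            · exact mul_nonneg (pow_pos hβpos _).le hB0.le
          calc ∑ s' : Fin B, (if (s:ℕ) < (s':ℕ) then β^(B-1-(s:ℕ)-1) * (B:ℝ) else 0)
              ≤ ∑ _s' : Fin B, β^(B-1-(s:ℕ)-1) * (B:ℝ) := Finset.sum_le_sum hterm2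
            _ = (B:ℝ) * (β^(B-1-(s:ℕ)-1) * (B:ℝ)) := by
                rw [Finset.sum_const, Finset.card_univ, Fintype.card_fin, nsmul_eq_mul]
        -- numeric conclusion
        have hfin : (B:ℝ)*(ρ*(B:ℝ)) + (B:ℝ)*(β^(B-1-(s:ℕ)-1) * (B:ℝ))
            + β^(B-1-(s:ℕ)) * (-1) + ρ ≤ 0 := by
          have hxB : (B:ℝ)^2 * 1 ≤ (B:ℝ)^2 * β^(B-1-(s:ℕ)-1) :=
            mul_le_mul_of_nonneg_left hpow1 (sq_nonneg _)
          have heq : (B:ℝ)*(ρ*(B:ℝ)) + (B:ℝ)*(β^(B-1-(s:ℕ)-1) * (B:ℝ))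
              + β^(B-1-(s:ℕ)) * (-1) + ρ
              = (B:ℝ)^2 * ρ + ρ - (B:ℝ)^2 * β^(B-1-(s:ℕ)-1) := by
            rw [hpow_split, hβdef]; ring
          rw [heq]
          linarith only [hB2ρ, hρle, hxB, hB2]
        linarith only [hT, hown, hrest, hsplit2, hconst, hite_sum, hite_tot, hfin]
  have hTN : ∀ s, T s ≤ Γ := by
    intro s
    rw [hTdef]
    dsimp only
    have hterm : ∀ s' ∈ Finset.univ, w s' * (max (dsrCost B s (d s') - ts s) 0
        - max (dsrCost B s (m s') - ts s) 0) ≤ w s' * (2*(B:ℝ)) := by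
      intro s' _
      refine mul_le_mul_of_nonneg_left ?_ (hw_nonneg s')
      apply DSRaux.cross_bound
      · have h1 := DSRaux.cost_le s (d s')
        have h2 := DSRaux.cost_ge s (m s')
        have h3 := hsp s
        linarith
      · linarith
    calc (∑ s', w s' * (max (dsrCost B s (d s') - ts s) 0
          - max (dsrCost B s (m s') - ts s) 0))
        ≤ ∑ s', w s' * (2*(B:ℝ)) := Finset.sum_le_sum hterm
      _ = (∑ s', w s') * (2*(B:ℝ)) := by rw [Finset.sum_mul]
      _ ≤ W * (2*(B:ℝ)) := mul_le_mul_of_nonneg_right hsumw (by linarith)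
      _ = Γ := by rw [hΓdef]; ring
  have hfinal : ∀ s : Fin B, dcvar δ p' (dsrCost B s) < α * (((s:ℕ):ℝ)+1) := by
    intro s
    by_cases hsA : r s = α
    · have h1 := hmaster s
      have h2 := hTA s hsA
      have h3 : (1-δ)⁻¹ * (ε * T s) ≤ (1-δ)⁻¹ * (ε * (-ρ)) :=
        mul_le_mul_of_nonneg_left (mul_le_mul_of_nonneg_left h2 hε_pos.le) hinv0
      have hid : (1-δ)⁻¹ * (ε * (-ρ)) = -(2*η) := by rw [hηdef]; ring
      have hCs := hCA s hsA
      linarith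
    · have h1 := hmaster s
      have h2 := hTN s
      have h3 : (1-δ)⁻¹ * (ε * T s) ≤ (1-δ)⁻¹ * (ε * Γ) :=
        mul_le_mul_of_nonneg_left (mul_le_mul_of_nonneg_left h2 hε_pos.le) hinv0
      have h4 : η + (1-δ)⁻¹ * (ε * Γ) = (1-δ)⁻¹ * (ε * (ρ/2 + Γ)) := by
        rw [hηdef]; ring
      have h5 := hgmin_le s (Finset.mem_filter.mpr ⟨Finset.mem_univ s, hsA⟩)
      rw [hgapdef] at h5
      dsimp only at h5
      linarith [hεG]
  have hstrat : ∀ s : Fin B, dsrRatio δ B p' s < α := by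
    intro s
    rw [DSRaux.ratio_eq]
    rw [div_lt_iff₀ (hsp s)]
    have := hfinal s
    linarith
  have hopt_le : α ≤ dsrCR δ B p' := by
    have hbdd : BddBelow (Set.range (fun q : {q : Fin B → ℝ // (∀ i, 0 ≤ q i) ∧ ∑ i, q i = 1}
        => dsrCR δ B (q : Fin B → ℝ))) := by
      refine ⟨0, ?_⟩
      rintro x ⟨⟨q, hq0, hq1⟩, rfl⟩
      have hne : Nonempty (Fin B) := ⟨⟨0, by omega⟩⟩
      have h0 : (0:ℝ) ≤ dsrRatio δ B q ⟨0, by omega⟩ := by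
        apply div_nonneg
        · refine le_trans ?_ (DSRaux.E_le_dcvar hδ0 hδ1 hq0 hq1)
          exact Finset.sum_nonneg fun i _ => mul_nonneg (hq0 i) (DSRaux.cost_nonneg _ i)
        · exact le_min (by norm_num) (by positivity)
      exact le_trans h0 (le_ciSup (Set.finite_range _).bddAbove _)
    exact ciInf_le hbdd ⟨p', hp'pos, hp'sum⟩
  have hlt : dsrCR δ B p' < α := by
    have hne : Nonempty (Fin B) := ⟨⟨0, by omega⟩⟩
    obtain ⟨s₀, hs₀⟩ := Finite.exists_max (fun s => dsrRatio δ B p' s)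
    have h1 : dsrCR δ B p' ≤ dsrRatio δ B p' s₀ := ciSup_le hs₀
    exact lt_of_le_of_lt h1 (hstrat s₀)
  linarith
end

section
/- Let B ≥ 2 be an integer, δ ∈ [0,1), and p a strategy for discrete-time ski rental with buying cost B. If p_i = 0 for some i ∈ [B], then the δ-CVaR competitive ratio at adversary decision i is strictly slack: α_δ^{B,p}(i) < α_δ^{B,p}. -/
open Finset Set

section Aux

variable {n : ℕ} {δ : ℝ} {p : Fin n → ℝ}

private lemma exp_le_body (hδ0 : 0 ≤ δ) (hδ1 : δ < 1)
    (hpos : ∀ i, 0 ≤ p i) (hsum : ∑ i, p i = 1) (f : Fin n → ℝ) (t : ℝ) :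
    ∑ i, p i * f i ≤ t + (1 - δ)⁻¹ * ∑ i, p i * max (f i - t) 0 := by
  have h1δ : (0:ℝ) < 1 - δ := by linarith
  have hv : (0:ℝ) < (1 - δ)⁻¹ := inv_pos.mpr h1δ
  have hvc : (1 - δ) * (1 - δ)⁻¹ = 1 := mul_inv_cancel₀ (ne_of_gt h1δ)
  have hinv : (1:ℝ) ≤ (1 - δ)⁻¹ := by nlinarith
  have hS0 : 0 ≤ ∑ i, p i * max (f i - t) 0 :=
    Finset.sum_nonneg fun i _ => mul_nonneg (hpos i) (le_max_right _ _)
  have h2 : ∑ i, p i * (f i - t) ≤ ∑ i, p i * max (f i - t) 0 :=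
    Finset.sum_le_sum fun i _ => mul_le_mul_of_nonneg_left (le_max_left _ _) (hpos i)
  have h3 : ∑ i, p i * (f i - t) = (∑ i, p i * f i) - t := by
    rw [Finset.sum_congr rfl (fun i _ => mul_sub (p i) (f i) t), Finset.sum_sub_distrib,
      ← Finset.sum_mul, hsum, one_mul]
  have h4 : (1:ℝ) * (∑ i, p i * max (f i - t) 0) ≤ (1 - δ)⁻¹ * ∑ i, p i * max (f i - t) 0 :=
    mul_le_mul_of_nonneg_right hinv hS0
  linarith

private lemma dcvar_bdd (hδ0 : 0 ≤ δ) (hδ1 : δ < 1)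
    (hpos : ∀ i, 0 ≤ p i) (hsum : ∑ i, p i = 1) (f : Fin n → ℝ) :
    BddBelow (Set.range fun t : ℝ => t + (1 - δ)⁻¹ * ∑ i, p i * max (f i - t) 0) :=
  ⟨∑ i, p i * f i, by rintro y ⟨t, rfl⟩; exact exp_le_body hδ0 hδ1 hpos hsum f t⟩

private lemma dcvar_lb (hδ0 : 0 ≤ δ) (hδ1 : δ < 1)
    (hpos : ∀ i, 0 ≤ p i) (hsum : ∑ i, p i = 1) (f : Fin n → ℝ) :
    ∑ i, p i * f i ≤ dcvar δ p f := by
  rw [dcvar, if_neg (ne_of_lt hδ1)]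
  exact le_ciInf (exp_le_body hδ0 hδ1 hpos hsum f)

private lemma dcvar_ub (hδ0 : 0 ≤ δ) (hδ1 : δ < 1)
    (hpos : ∀ i, 0 ≤ p i) (hsum : ∑ i, p i = 1) (f : Fin n → ℝ) (c : ℝ)
    (hc : ∀ x, p x ≠ 0 → f x ≤ c) : dcvar δ p f ≤ c := by
  rw [dcvar, if_neg (ne_of_lt hδ1)]
  refine le_trans (ciInf_le (dcvar_bdd hδ0 hδ1 hpos hsum f) c) ?_
  have hz : ∑ x, p x * max (f x - c) 0 = 0 := by
    refine Finset.sum_eq_zero fun x _ => ?_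
    by_cases hx : p x = 0
    · simp [hx]
    · have := hc x hx
      rw [max_eq_right (by linarith : f x - c ≤ 0), mul_zero]
  rw [hz, mul_zero, add_zero]

private lemma dcvar_shift (hδ0 : 0 ≤ δ) (hδ1 : δ < 1)
    (hpos : ∀ i, 0 ≤ p i) (hsum : ∑ i, p i = 1) (f g : Fin n → ℝ) (c : ℝ)
    (hc : ∀ x, p x ≠ 0 → f x - c ≤ g x) : dcvar δ p f - c ≤ dcvar δ p g := by
  rw [dcvar, dcvar, if_neg (ne_of_lt hδ1), if_neg (ne_of_lt hδ1)]
  refine le_ciInf fun t => ?_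
  have h1 : (⨅ t : ℝ, t + (1 - δ)⁻¹ * ∑ i, p i * max (f i - t) 0) ≤
      (t + c) + (1 - δ)⁻¹ * ∑ i, p i * max (f i - (t + c)) 0 :=
    ciInf_le (dcvar_bdd hδ0 hδ1 hpos hsum f) (t + c)
  have h2 : ∑ i, p i * max (f i - (t + c)) 0 ≤ ∑ i, p i * max (g i - t) 0 := by
    refine Finset.sum_le_sum fun x _ => ?_
    by_cases hx : p x = 0
    · simp [hx]
    · have := hc x hx
      exact mul_le_mul_of_nonneg_left (max_le_max (by linarith) le_rfl) (hpos x)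
  have hv : (0:ℝ) ≤ (1 - δ)⁻¹ := le_of_lt (inv_pos.mpr (by linarith))
  have h3 := mul_le_mul_of_nonneg_left h2 hv
  linarith

end Aux

/-- Lemma 15: if a strategy assigns zero probability to day `i`, then its `δ`-CVaR
competitive ratio at adversary decision `i` is strictly slack. -/
theorem dsr_zero_prob_implies_slack (B : ℕ) (hB : 2 ≤ B) (δ : ℝ) (hδ : δ ∈ Ico (0:ℝ) 1)
    (p : Fin B → ℝ) (hpos : ∀ i, 0 ≤ p i) (hsum : ∑ i, p i = 1)
    (i : Fin B) (hi : p i = 0) :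
    dsrRatio δ B p i < dsrCR δ B p := by
  obtain ⟨hδ0, hδ1⟩ := hδ
  have hB0 : (0:ℝ) < B := by exact_mod_cast Nat.lt_of_lt_of_le (by norm_num) hB
  have hB2 : (2:ℝ) ≤ B := by exact_mod_cast hB
  have hBdd : BddAbove (Set.range (dsrRatio δ B p)) := Set.Finite.bddAbove (Set.finite_range _)
  suffices h : ∃ s, dsrRatio δ B p i < dsrRatio δ B p s by
    obtain ⟨s, hs⟩ := h
    exact lt_of_lt_of_le hs (le_ciSup hBdd s)
  have hiB : (i:ℕ) < B := i.isLt
  have hiR : ((i:ℕ) : ℝ) + 1 ≤ B := by exact_mod_cast Nat.succ_le_of_lt hiB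
  have hiR0 : (0:ℝ) < ((i:ℕ) : ℝ) + 1 := by positivity
  have hden_i : min (((i:ℕ) : ℝ) + 1) (B:ℝ) = ((i:ℕ) : ℝ) + 1 := min_eq_left hiR
  set C := dcvar δ p (dsrCost B i) with hC
  have hratio_i : dsrRatio δ B p i = C / (((i:ℕ) : ℝ) + 1) := by
    rw [dsrRatio, hden_i]
  set S := ∑ x : Fin B, p x * ((x:ℕ) : ℝ) with hS
  have hS0 : 0 ≤ S := Finset.sum_nonneg fun x _ => mul_nonneg (hpos x) (Nat.cast_nonneg _)
  rcases eq_or_lt_of_le hS0 with hSz | hSpos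
  · -- S = 0 : all mass on day 0
    have hzero : ∀ x : Fin B, (x:ℕ) ≠ 0 → p x = 0 := by
      intro x hx
      by_contra hpx
      have hxpos : (0:ℝ) < p x * ((x:ℕ) : ℝ) := by
        have h1 : (0:ℝ) < p x := lt_of_le_of_ne (hpos x) (Ne.symm hpx)
        have h2 : (0:ℝ) < ((x:ℕ) : ℝ) := by
          exact_mod_cast Nat.pos_of_ne_zero hx
        positivity
      have hle : p x * ((x:ℕ) : ℝ) ≤ S :=
        Finset.single_le_sum (f := fun y : Fin B => p y * ((y:ℕ) : ℝ))
          (fun y _ => mul_nonneg (hpos y) (Nat.cast_nonneg _)) (Finset.mem_univ x)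
      linarith [hSz]
    set z : Fin B := ⟨0, by omega⟩ with hz
    have hpz : p z = 1 := by
      have h := Finset.sum_eq_single (s := Finset.univ) (f := p) z
        (fun x _ hx => hzero x fun h0 => hx (Fin.ext h0))
        (fun h => absurd (Finset.mem_univ z) h)
      rw [← h]; exact hsum
    have hiz : 1 ≤ (i:ℕ) := by
      rcases Nat.eq_zero_or_pos (i:ℕ) with h0 | h1
      · exfalso
        have : i = z := Fin.ext h0
        rw [this, hpz] at hi; norm_num at hi
      · exact h1
    have hCub : C ≤ (B:ℝ) := by
      refine dcvar_ub hδ0 hδ1 hpos hsum _ _ fun x hx => ?_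
      have hx0 : (x:ℕ) = 0 := by
        by_contra h0; exact hx (hzero x h0)
      rw [dsrCost, if_pos (by omega), hx0]
      norm_num
    have hrlb : (B:ℝ) ≤ dsrRatio δ B p z := by
      have hE : ∑ x, p x * dsrCost B z x = (B:ℝ) := by
        rw [Finset.sum_eq_single z (fun x _ hx => by
          rw [hzero x (fun h0 => hx (Fin.ext h0)), zero_mul])
          (fun h => absurd (Finset.mem_univ z) h)]
        rw [hpz, one_mul, dsrCost, if_pos (le_refl _)]
        simp [hz]
      have hlb := dcvar_lb hδ0 hδ1 hpos hsum (dsrCost B z)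
      rw [hE] at hlb
      have hz0 : ((z:ℕ) : ℝ) = 0 := by rw [hz]; simp
      have hdz : min (((z:ℕ) : ℝ) + 1) (B:ℝ) = 1 := by
        rw [hz0, zero_add]; exact min_eq_left (by linarith)
      rw [dsrRatio, hdz, div_one]
      exact hlb
    refine ⟨z, ?_⟩
    rw [hratio_i]
    have hi1R : (1:ℝ) ≤ ((i:ℕ) : ℝ) := by exact_mod_cast hiz
    have h1 : C / (((i:ℕ) : ℝ) + 1) ≤ (B:ℝ) / (((i:ℕ) : ℝ) + 1) := by gcongr
    have h2 : (B:ℝ) / (((i:ℕ) : ℝ) + 1) < (B:ℝ) := div_lt_self hB0 (by linarith)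
    linarith
  · -- S > 0
    by_cases hCb : C ≤ ((i:ℕ) : ℝ) + 1
    · -- ratio at i ≤ 1 < ratio at B-1
      set w : Fin B := ⟨B - 1, by omega⟩ with hw
      have hwn : (w:ℕ) = B - 1 := by rw [hw]
      have hwv : ((w:ℕ) : ℝ) = (B:ℝ) - 1 := by
        rw [hwn, Nat.cast_sub (by omega)]; norm_num
      have hE : ∑ x, p x * dsrCost B w x = (B:ℝ) + S := by
        have hcost : ∀ x : Fin B, dsrCost B w x = (B:ℝ) + ((x:ℕ) : ℝ) := by
          intro x
          have hxw : (x:ℕ) ≤ (w:ℕ) := by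
            rw [hwn]; exact Nat.le_pred_of_lt x.isLt
          rw [dsrCost, if_pos hxw]
        rw [Finset.sum_congr rfl (fun x _ => by rw [hcost x, mul_add])]
        rw [Finset.sum_add_distrib, ← Finset.sum_mul, hsum, one_mul, hS]
      have hlb := dcvar_lb hδ0 hδ1 hpos hsum (dsrCost B w)
      rw [hE] at hlb
      have hdw : min (((w:ℕ) : ℝ) + 1) (B:ℝ) = (B:ℝ) := by
        rw [hwv]
        have : (B:ℝ) - 1 + 1 = (B:ℝ) := by ring
        rw [this, min_self]
      refine ⟨w, ?_⟩
      rw [hratio_i, dsrRatio, hdw]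
      have h1 : C / (((i:ℕ) : ℝ) + 1) ≤ 1 := div_le_one_of_le₀ hCb (le_of_lt hiR0)
      have h2 : (1:ℝ) < ((B:ℝ) + S) / B := by
        rw [lt_div_iff₀ hB0]; linarith
      have h3 : ((B:ℝ) + S) / B ≤ dcvar δ p (dsrCost B w) / B := by gcongr
      linarith
    · -- C > i+1 : use s = i-1
      push_neg at hCb
      have hi1 : 1 ≤ (i:ℕ) := by
        by_contra h0
        push_neg at h0
        have hi0 : (i:ℕ) = 0 := by omega
        have hub : C ≤ ((i:ℕ) : ℝ) + 1 := by
          refine dcvar_ub hδ0 hδ1 hpos hsum _ _ fun x hx => ?_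
          have hxi : x ≠ i := fun h => hx (h ▸ hi)
          have hxv : ¬ ((x:ℕ) ≤ (i:ℕ)) := by
            rw [hi0]
            intro h
            exact hxi (Fin.ext (by omega))
          rw [dsrCost, if_neg hxv]
        linarith
      set w : Fin B := ⟨(i:ℕ) - 1, by omega⟩ with hw
      have hwn : (w:ℕ) = (i:ℕ) - 1 := by rw [hw]
      have hwv : ((w:ℕ) : ℝ) = ((i:ℕ) : ℝ) - 1 := by
        rw [hwn, Nat.cast_sub hi1]; norm_num
      have hshift : C - 1 ≤ dcvar δ p (dsrCost B w) := by
        refine dcvar_shift hδ0 hδ1 hpos hsum _ _ 1 fun x hx => ?_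
        have hxi : x ≠ i := fun h => hx (h ▸ hi)
        rw [dsrCost, dsrCost]
        by_cases hle : (x:ℕ) ≤ (w:ℕ)
        · have hle' : (x:ℕ) ≤ (i:ℕ) := by rw [hwn] at hle; omega
          rw [if_pos hle, if_pos hle']
          linarith
        · have hle' : ¬ ((x:ℕ) ≤ (i:ℕ) - 1) := by rw [hwn] at hle; exact hle
          have hgt : ¬ ((x:ℕ) ≤ (i:ℕ)) := by
            intro h
            exact hxi (Fin.ext (by omega))
          rw [if_neg hle, if_neg hgt, hwv]
          linarith
      have hdw : min (((w:ℕ) : ℝ) + 1) (B:ℝ) = ((i:ℕ) : ℝ) := by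
        rw [hwv]
        have he : ((i:ℕ) : ℝ) - 1 + 1 = ((i:ℕ) : ℝ) := by ring
        rw [he]
        exact min_eq_left (by linarith)
      refine ⟨w, ?_⟩
      rw [hratio_i, dsrRatio, hdw]
      have hipos : (0:ℝ) < ((i:ℕ) : ℝ) := by exact_mod_cast hi1
      have h1 : C / (((i:ℕ) : ℝ) + 1) < (C - 1) / ((i:ℕ) : ℝ) := by
        rw [div_lt_div_iff₀ hiR0 hipos]
        nlinarith
      have h2 : (C - 1) / ((i:ℕ) : ℝ) ≤ dcvar δ p (dsrCost B w) / ((i:ℕ) : ℝ) := by gcongr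
      linarith
end
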